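/- arXiv:1805.05141 — 8 statements merged into one kernel-verified Lean document; each statement's English description precedes it below -/
import Mathlib

section
/- Let c : [0,∞) → [0,∞) be Borel measurable with c(0)=0, and define τ(w) = inf{ F^c[ψ] : ψ ∈ H¹(ℝ), ψ ≥ 0, ∫_ℝ ψ dy = w }. Assume τ(w) < ∞ for every w > 0. Then τ is admissible: τ ≥ 0, τ(0)=0, τ is nondecreasing, concave on [0,∞), and continuous (in particular continuous at 0). -/
/-!
Cutting an admissible profile `ψ` at a point `t` and reflecting the part on one side across `t`
gives an admissible profile of twice that part's mass with twice its energy. Splitting the mass of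
a near-optimal profile of mass `(u + v) / 2` into `u / 2` and `v / 2` therefore gives the midpoint
inequality `τ u + τ v ≤ 2 τ ((u + v) / 2)`. With `τ ≥ 0 = τ 0` this forces monotonicity, and then,
by dyadic approximation, concavity; concavity gives continuity away from `0`. At `0`, cutting
where the left part has small positive mass and small energy gives arbitrarily cheap small masses.
-/

open MeasureTheory Filter Set
open scoped ENNReal Topology

/-- `ψ` lies in `H¹(ℝ)` with weak derivative `dψ`: both are square integrable and
`ψ` is the (locally absolutely continuous) primitive of `dψ`. -/
def MemH1 (ψ dψ : ℝ → ℝ) : Prop :=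
  MemLp ψ 2 volume ∧ MemLp dψ 2 volume ∧
    ∀ t : ℝ, ψ t = ψ 0 + ∫ s in (0:ℝ)..t, dψ s

/-- The phase field energy `F^c[ψ] = ∫_ℝ (1/2)|ψ′|² + c(ψ)`. -/
noncomputable def phaseEnergy (c : ℝ → ℝ) (ψ dψ : ℝ → ℝ) : ℝ≥0∞ :=
  ∫⁻ y, ENNReal.ofReal ((1/2) * dψ y ^ 2 + c (ψ y))

/-- The induced transport cost `τ^c(w) = inf { F^c[ψ] | ψ ∈ H¹(ℝ), ψ ≥ 0, ∫ψ = w }`. -/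
noncomputable def tauC (c : ℝ → ℝ) (w : ℝ) : ℝ≥0∞ :=
  ⨅ (p : (ℝ → ℝ) × (ℝ → ℝ)) (_ : MemH1 p.1 p.2 ∧ (∀ y, 0 ≤ p.1 y) ∧
      Integrable p.1 ∧ (∫ y, p.1 y) = w), phaseEnergy c p.1 p.2

theorem MeasureTheory.MemLp.intervalIntegrable {E : Type*} [NormedAddCommGroup E] {f : ℝ → E}
    {p : ℝ≥0∞} (hf : MemLp f p volume) (hp : 1 ≤ p) (a b : ℝ) :
    IntervalIntegrable f volume a b :=
  ((hf.locallyIntegrable hp).integrableOn_isCompact isCompact_uIcc).intervalIntegrable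

theorem MeasureTheory.Integrable.continuous_setIntegral_Iic {f : ℝ → ℝ} (hf : Integrable f) :
    Continuous fun t ↦ ∫ y in Iic t, f y :=
  continuous_iff_continuousAt.2 fun t ↦
    (hf.integrableOn.continuousOn_Iic_primitive_Iic (a₀ := t + 1)).continuousAt
      (Iic_mem_nhds (lt_add_one t))

theorem MeasureTheory.Integrable.tendsto_setIntegral_Iic_atTop {f : ℝ → ℝ} (hf : Integrable f) :
    Tendsto (fun t ↦ ∫ y in Iic t, f y) atTop (𝓝 (∫ y, f y)) := by
  simpa using tendsto_setIntegral_of_monotone (fun _ ↦ measurableSet_Iic) monotone_Iic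
    hf.integrableOn

theorem MeasureTheory.Integrable.exists_setIntegral_Iic_eq {f : ℝ → ℝ} (hf : Integrable f) {u : ℝ}
    (hu₀ : 0 < u) (hu : u < ∫ y, f y) : ∃ t, ∫ y in Iic t, f y = u := by
  have hbot : Tendsto (fun t ↦ ∫ y in Iic t, f y) atBot (𝓝 0) :=
    tendsto_integral_Iic_zero tendsto_id
  obtain ⟨a, ha⟩ := (hbot.eventually (gt_mem_nhds hu₀)).exists
  obtain ⟨b, hb, hab⟩ := ((hf.tendsto_setIntegral_Iic_atTop.eventually (lt_mem_nhds hu)).and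
    (eventually_ge_atTop a)).exists
  obtain ⟨t, -, ht⟩ :=
    intermediate_value_Icc hab hf.continuous_setIntegral_Iic.continuousOn ⟨ha.le, hb.le⟩
  exact ⟨t, ht⟩

theorem tendsto_setLIntegral_Iic_atBot {f : ℝ → ℝ≥0∞} (hf : ∫⁻ y, f y ≠ ⊤) :
    Tendsto (fun t ↦ ∫⁻ y in Iic t, f y) atBot (𝓝 0) := by
  have := isFiniteMeasure_withDensity hf
  have := tendsto_measure_iInter_atBot (μ := volume.withDensity f)
    (fun _ ↦ measurableSet_Iic.nullMeasurableSet) monotone_Iic ⟨0, measure_ne_top _ _⟩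
  rw [iInter_eq_empty_iff.2 fun y ↦ ⟨y - 1, by simp⟩, measure_empty] at this
  simpa [Function.comp_def, withDensity_apply _ measurableSet_Iic] using this

theorem tendsto_setLIntegral_Iic_nhdsGT {f : ℝ → ℝ≥0∞} (hf : ∫⁻ y, f y ≠ ⊤) (a : ℝ) :
    Tendsto (fun t ↦ ∫⁻ y in Iic t, f y) (𝓝[>] a) (𝓝 (∫⁻ y in Iic a, f y)) := by
  have := isFiniteMeasure_withDensity hf
  have := tendsto_measure_biInter_gt (μ := volume.withDensity f)
    (fun _ _ ↦ measurableSet_Iic.nullMeasurableSet) (fun _ _ _ hij ↦ Iic_subset_Iic.2 hij)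
    ⟨a + 1, lt_add_one a, measure_ne_top _ _⟩
  have hInter : ⋂ r > a, Iic r = Iic a := by
    ext y
    simp only [mem_iInter, mem_Iic]
    exact ⟨le_of_forall_gt_imp_ge_of_dense, fun hy _ hr ↦ hy.trans hr.le⟩
  rw [hInter] at this
  simpa [Function.comp_def, withDensity_apply _ measurableSet_Iic] using this

theorem eqOn_zero_Iic_of_setIntegral_Iic_eq_zero {f : ℝ → ℝ} {a : ℝ} (hf : Continuous f)
    (hnn : 0 ≤ f) (hint : IntegrableOn f (Iic a)) (h : ∫ y in Iic a, f y = 0) : EqOn f 0 (Iic a) :=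
  Measure.eqOn_of_ae_eq ((integral_eq_zero_iff_of_nonneg hnn hint).1 h) hf.continuousOn
    continuousOn_const (by simp)

theorem setIntegral_Iic_comp_sub_left {E : Type*} [NormedAddCommGroup E] [NormedSpace ℝ E]
    (f : ℝ → E) (a t : ℝ) : ∫ y in Iic t, f (a - y) = ∫ y in Ioi (a - t), f y := by
  have hpre : (fun y ↦ a - y) ⁻¹' Ici (a - t) = Iic t := by ext; simp
  rw [← integral_Ici_eq_integral_Ioi, ← hpre,
    (Measure.measurePreserving_sub_left volume a).setIntegral_preimage_emb
      (MeasurableEquiv.subLeft a).measurableEmbedding]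

theorem setLIntegral_Iic_comp_sub_left (f : ℝ → ℝ≥0∞) (a t : ℝ) :
    ∫⁻ y in Iic t, f (a - y) = ∫⁻ y in Ioi (a - t), f y := by
  have hpre : (fun y ↦ a - y) ⁻¹' Ici (a - t) = Iic t := by ext; simp
  rw [setLIntegral_congr Ioi_ae_eq_Ici, ← hpre,
    (Measure.measurePreserving_sub_left volume a).setLIntegral_comp_preimage_emb
      (MeasurableEquiv.subLeft a).measurableEmbedding]

theorem memH1_iff {ψ dψ : ℝ → ℝ} : MemH1 ψ dψ ↔
    MemLp ψ 2 volume ∧ MemLp dψ 2 volume ∧ ∀ a b, ∫ s in a..b, dψ s = ψ b - ψ a := by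
  refine ⟨fun h ↦ ⟨h.1, h.2.1, fun a b ↦ ?_⟩, fun ⟨hψ, hdψ, hF⟩ ↦ ⟨hψ, hdψ, fun t ↦ ?_⟩⟩
  · rw [← intervalIntegral.integral_interval_sub_left (h.2.1.intervalIntegrable one_le_two 0 b)
      (h.2.1.intervalIntegrable one_le_two 0 a), h.2.2 a, h.2.2 b]
    ring
  · rw [hF]; ring

theorem MemH1.continuous {ψ dψ : ℝ → ℝ} (h : MemH1 ψ dψ) : Continuous ψ := by
  rw [funext h.2.2]
  exact continuous_const.add
    (intervalIntegral.continuous_primitive (h.2.1.intervalIntegrable one_le_two) 0)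

theorem MemH1.piecewise {ψ₁ d₁ ψ₂ d₂ : ℝ → ℝ} (h₁ : MemH1 ψ₁ d₁) (h₂ : MemH1 ψ₂ d₂) {t : ℝ}
    (ht : ψ₁ t = ψ₂ t) : MemH1 ((Iic t).piecewise ψ₁ ψ₂) ((Iic t).piecewise d₁ d₂) := by
  set Ψ := (Iic t).piecewise ψ₁ ψ₂
  set D := (Iic t).piecewise d₁ d₂
  have hD : MemLp D 2 volume := h₁.2.1.restrict _ |>.piecewise measurableSet_Iic (h₂.2.1.restrict _)
  have hΨ : MemLp Ψ 2 volume := h₁.1.restrict _ |>.piecewise measurableSet_Iic (h₂.1.restrict _)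
  rw [memH1_iff] at h₁ h₂ ⊢
  have hΨt : Ψ t = ψ₁ t := piecewise_eq_of_mem _ _ _ self_mem_Iic
  have to_t (a : ℝ) : ∫ s in a..t, D s = Ψ t - Ψ a := by
    rcases le_or_gt a t with hat | hta
    · have hDa : EqOn D d₁ (uIcc a t) := fun s hs ↦
        piecewise_eq_of_mem _ _ _ (by rw [uIcc_of_le hat] at hs; exact hs.2)
      have hΨa : Ψ a = ψ₁ a := piecewise_eq_of_mem _ _ _ (mem_Iic.2 hat)
      rw [intervalIntegral.integral_congr hDa, h₁.2.2, hΨt, hΨa]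
    · have hDa : EqOn D d₂ (Ioc t a) := fun s hs ↦ piecewise_eq_of_notMem _ _ _ (not_le.2 hs.1)
      have hΨa : Ψ a = ψ₂ a := piecewise_eq_of_notMem _ _ _ (not_le.2 hta)
      rw [intervalIntegral.integral_symm, intervalIntegral.integral_of_le hta.le,
        setIntegral_congr_fun measurableSet_Ioc hDa, ← intervalIntegral.integral_of_le hta.le,
        h₂.2.2, hΨt, ht, hΨa, neg_sub]
  refine ⟨hΨ, hD, fun a b ↦ ?_⟩
  rw [← intervalIntegral.integral_add_adjacent_intervals (hD.intervalIntegrable one_le_two a t)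
    (hD.intervalIntegrable one_le_two t b), intervalIntegral.integral_symm b t, to_t, to_t]
  ring

theorem MemH1.comp_sub_left {ψ dψ : ℝ → ℝ} (h : MemH1 ψ dψ) (a : ℝ) :
    MemH1 (fun y ↦ ψ (a - y)) (fun y ↦ -dψ (a - y)) := by
  have hσ := Measure.measurePreserving_sub_left volume a
  rw [memH1_iff] at h ⊢
  refine ⟨h.1.comp_measurePreserving hσ, (h.2.1.comp_measurePreserving hσ).neg, fun x y ↦ ?_⟩
  rw [intervalIntegral.integral_neg, intervalIntegral.integral_comp_sub_left (fun s ↦ dψ s),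
    h.2.2]
  ring

theorem memH1_zero : MemH1 0 0 := ⟨MemLp.zero, MemLp.zero, by simp⟩

def IsProfile (ψ dψ : ℝ → ℝ) (w : ℝ) : Prop :=
  MemH1 ψ dψ ∧ (∀ y, 0 ≤ ψ y) ∧ Integrable ψ ∧ ∫ y, ψ y = w

noncomputable def energyDensity (c ψ dψ : ℝ → ℝ) (y : ℝ) : ℝ≥0∞ :=
  ENNReal.ofReal ((1 / 2) * dψ y ^ 2 + c (ψ y))

section Profiles

variable {c ψ dψ : ℝ → ℝ} {w : ℝ}

theorem tauC_le_phaseEnergy (h : IsProfile ψ dψ w) : tauC c w ≤ phaseEnergy c ψ dψ :=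
  iInf₂_le (ψ, dψ) h

theorem exists_isProfile_phaseEnergy_lt {C : ℝ≥0∞} (h : tauC c w < C) :
    ∃ ψ dψ, IsProfile ψ dψ w ∧ phaseEnergy c ψ dψ < C := by
  simp only [tauC, iInf_lt_iff] at h
  obtain ⟨⟨ψ, dψ⟩, hp, hlt⟩ := h
  exact ⟨ψ, dψ, hp, hlt⟩

theorem tauC_zero (hc0 : c 0 = 0) : tauC c 0 = 0 := by
  have hprof : IsProfile 0 0 0 := ⟨memH1_zero, fun _ ↦ le_rfl, integrable_zero _ _ _, by simp⟩
  refine le_antisymm ((tauC_le_phaseEnergy hprof).trans ?_) bot_le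
  simp [phaseEnergy, hc0]

theorem IsProfile.comp_sub_left (h : IsProfile ψ dψ w) (a : ℝ) :
    IsProfile (fun y ↦ ψ (a - y)) (fun y ↦ -dψ (a - y)) w :=
  ⟨h.1.comp_sub_left a, fun _ ↦ h.2.1 _, h.2.2.1.comp_sub_left a,
    (integral_sub_left_eq_self ψ volume a).trans h.2.2.2⟩

theorem energyDensity_comp_sub_left (c ψ dψ : ℝ → ℝ) (a y : ℝ) :
    energyDensity c (fun y ↦ ψ (a - y)) (fun y ↦ -dψ (a - y)) y = energyDensity c ψ dψ (a - y) := by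
  simp [energyDensity]

theorem phaseEnergy_piecewise (c ψ₁ d₁ ψ₂ d₂ : ℝ → ℝ) {s : Set ℝ} [DecidablePred (· ∈ s)]
    (hs : MeasurableSet s) :
    phaseEnergy c (s.piecewise ψ₁ ψ₂) (s.piecewise d₁ d₂) =
      (∫⁻ y in s, energyDensity c ψ₁ d₁ y) + ∫⁻ y in sᶜ, energyDensity c ψ₂ d₂ y := by
  rw [phaseEnergy, ← lintegral_piecewise hs]
  congr 1 with y
  by_cases hy : y ∈ s <;> simp [energyDensity, hy]

theorem IsProfile.tauC_two_mul_setIntegral_Iic_le (h : IsProfile ψ dψ w) (t : ℝ) :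
    tauC c (2 * ∫ y in Iic t, ψ y) ≤ 2 * ∫⁻ y in Iic t, energyDensity c ψ dψ y := by
  have hr := h.comp_sub_left (2 * t)
  have ht : 2 * t - t = t := by ring
  have hmass : ∫ y in Ioi t, ψ (2 * t - y) = ∫ y in Iic t, ψ y := by
    simpa [ht] using (setIntegral_Iic_comp_sub_left (fun y ↦ ψ (2 * t - y)) (2 * t) t).symm
  have henergy : ∫⁻ y in Ioi t, energyDensity c (fun y ↦ ψ (2 * t - y)) (fun y ↦ -dψ (2 * t - y)) y
      = ∫⁻ y in Iic t, energyDensity c ψ dψ y := by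
    simp_rw [energyDensity_comp_sub_left]
    simpa [ht] using (setLIntegral_Iic_comp_sub_left
      (fun y ↦ energyDensity c ψ dψ (2 * t - y)) (2 * t) t).symm
  have hprof : IsProfile ((Iic t).piecewise ψ fun y ↦ ψ (2 * t - y))
      ((Iic t).piecewise dψ fun y ↦ -dψ (2 * t - y)) (2 * ∫ y in Iic t, ψ y) := by
    refine ⟨h.1.piecewise hr.1 (by simp [ht]), fun y ↦ ?_,
      Integrable.piecewise measurableSet_Iic h.2.2.1.integrableOn hr.2.2.1.integrableOn, ?_⟩
    · by_cases hy : y ∈ Iic t <;> simp [hy, h.2.1]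
    · rw [integral_piecewise measurableSet_Iic h.2.2.1.integrableOn hr.2.2.1.integrableOn,
        compl_Iic, hmass, two_mul]
  calc tauC c (2 * ∫ y in Iic t, ψ y) ≤ phaseEnergy c _ _ := tauC_le_phaseEnergy hprof
    _ = 2 * ∫⁻ y in Iic t, energyDensity c ψ dψ y := by
      rw [phaseEnergy_piecewise _ _ _ _ _ measurableSet_Iic, compl_Iic, henergy, two_mul]

theorem IsProfile.tauC_two_mul_setIntegral_Ioi_le (h : IsProfile ψ dψ w) (t : ℝ) :
    tauC c (2 * ∫ y in Ioi t, ψ y) ≤ 2 * ∫⁻ y in Ioi t, energyDensity c ψ dψ y := by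
  have ht : 2 * t - t = t := by ring
  have := (h.comp_sub_left (2 * t)).tauC_two_mul_setIntegral_Iic_le (c := c) t
  simp_rw [energyDensity_comp_sub_left] at this
  rwa [setIntegral_Iic_comp_sub_left, setLIntegral_Iic_comp_sub_left, ht] at this

theorem tauC_add_tauC_le_two_mul {u v : ℝ} (hu : 0 < u) (hv : 0 < v) :
    tauC c u + tauC c v ≤ 2 * tauC c ((u + v) / 2) := by
  rw [mul_comm, ← ENNReal.div_le_iff two_ne_zero ENNReal.ofNat_ne_top]
  refine le_iInf₂ fun ⟨ψ, dψ⟩ h ↦ ?_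
  change IsProfile ψ dψ _ at h
  rw [ENNReal.div_le_iff two_ne_zero ENNReal.ofNat_ne_top, mul_comm]
  obtain ⟨t, ht⟩ := h.2.2.1.exists_setIntegral_Iic_eq (half_pos hu) (by rw [h.2.2.2]; linarith)
  have hIoi : ∫ y in Ioi t, ψ y = v / 2 := by
    have := integral_add_compl (measurableSet_Iic (a := t)) h.2.2.1
    rw [compl_Iic, ht, h.2.2.2] at this
    linarith
  calc tauC c u + tauC c v
      = tauC c (2 * ∫ y in Iic t, ψ y) + tauC c (2 * ∫ y in Ioi t, ψ y) := by
        rw [ht, hIoi, mul_div_cancel₀ _ two_ne_zero, mul_div_cancel₀ _ two_ne_zero]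
    _ ≤ 2 * (∫⁻ y in Iic t, energyDensity c ψ dψ y) + 2 * ∫⁻ y in Ioi t, energyDensity c ψ dψ y :=
        add_le_add (h.tauC_two_mul_setIntegral_Iic_le t) (h.tauC_two_mul_setIntegral_Ioi_le t)
    _ = 2 * phaseEnergy c ψ dψ := by
        rw [← mul_add, ← compl_Iic, lintegral_add_compl _ measurableSet_Iic]; rfl

theorem IsProfile.exists_pos_tauC_le_of_tendsto {l : Filter ℝ} [l.NeBot] (h : IsProfile ψ dψ w)
    (hm : ∀ᶠ t in l, 0 < ∫ y in Iic t, ψ y)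
    (hE : Tendsto (fun t ↦ ∫⁻ y in Iic t, energyDensity c ψ dψ y) l (𝓝 0))
    {ε : ℝ≥0∞} (hε : 0 < ε) : ∃ w' > 0, tauC c w' ≤ ε := by
  obtain ⟨t, hmt, hEt⟩ := (hm.and (hE.eventually (gt_mem_nhds (ENNReal.half_pos hε.ne')))).exists
  refine ⟨2 * ∫ y in Iic t, ψ y, by positivity, (h.tauC_two_mul_setIntegral_Iic_le t).trans ?_⟩
  calc 2 * ∫⁻ y in Iic t, energyDensity c ψ dψ y ≤ 2 * (ε / 2) := by gcongr
    _ = ε := ENNReal.mul_div_cancel' (by simp) (by simp)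

/-- `dψ` need not vanish where `ψ` does, so it is replaced by `0` on `Iic a`; the energy left of
a cut `t > a` then tends to `0` as `t ↓ a`. -/
theorem IsProfile.exists_pos_tauC_le_of_eqOn_zero (hc0 : c 0 = 0) (h : IsProfile ψ dψ w)
    (hE : phaseEnergy c ψ dψ ≠ ⊤) {a : ℝ} (hψa : EqOn ψ 0 (Iic a))
    (hpos : ∀ t > a, 0 < ∫ y in Iic t, ψ y) {ε : ℝ≥0∞} (hε : 0 < ε) :
    ∃ w' > 0, tauC c w' ≤ ε := by
  set d := (Iic a).piecewise 0 dψ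
  have hψ : (Iic a).piecewise 0 ψ = ψ := by
    ext y
    by_cases hy : y ≤ a
    · simp [hy, hψa (mem_Iic.2 hy)]
    · simp [hy]
  have h' : IsProfile ψ d w := ⟨hψ ▸ memH1_zero.piecewise h.1 (hψa self_mem_Iic).symm, h.2⟩
  have hed : energyDensity c ψ d = (Ioi a).indicator (energyDensity c ψ dψ) := by
    ext y
    by_cases hy : y ≤ a
    · simp [energyDensity, d, hy, hψa (mem_Iic.2 hy), hc0]
    · rw [indicator_of_mem (mem_Ioi.2 (not_le.1 hy))]
      simp [energyDensity, d, hy]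
  have hfin : ∫⁻ y, energyDensity c ψ d y ≠ ⊤ := by
    rw [hed]
    exact ne_top_of_le_ne_top hE
      ((lintegral_indicator_le _ _).trans (setLIntegral_le_lintegral _ _))
  have hvanish : ∫⁻ y in Iic a, energyDensity c ψ d y = 0 := by
    rw [hed]
    exact (setLIntegral_congr_fun measurableSet_Iic fun y hy ↦
      indicator_of_notMem (not_lt.2 hy) _).trans lintegral_zero
  exact h'.exists_pos_tauC_le_of_tendsto (l := 𝓝[>] a) (eventually_nhdsWithin_of_forall hpos)
    (hvanish ▸ tendsto_setLIntegral_Iic_nhdsGT hfin a) hε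

theorem exists_pos_tauC_le (hc0 : c 0 = 0) (hw : 0 < w) (hfin : tauC c w ≠ ⊤) {ε : ℝ≥0∞}
    (hε : 0 < ε) : ∃ w' > 0, tauC c w' ≤ ε := by
  obtain ⟨ψ, dψ, h, hE⟩ := exists_isProfile_phaseEnergy_lt (lt_top_iff_ne_top.2 hfin)
  set m := fun t ↦ ∫ y in Iic t, ψ y
  have hm_nonneg (t : ℝ) : 0 ≤ m t := setIntegral_nonneg measurableSet_Iic fun y _ ↦ h.2.1 y
  by_cases hZ : ∃ a, m a = 0
  · set Z := m ⁻¹' {0}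
    have hZ_closed : IsClosed Z := isClosed_singleton.preimage h.2.2.1.continuous_setIntegral_Iic
    have hZ_bdd : BddAbove Z := by
      obtain ⟨b, hb⟩ := eventually_atTop.1
        (h.2.2.1.tendsto_setIntegral_Iic_atTop.eventually (lt_mem_nhds (h.2.2.2 ▸ hw)))
      exact ⟨b, fun t (ht : m t = 0) ↦ le_of_not_gt fun hbt ↦ (hb t hbt.le).ne' ht⟩
    have ha : m (sSup Z) = 0 := hZ_closed.csSup_mem hZ hZ_bdd
    refine h.exists_pos_tauC_le_of_eqOn_zero hc0 hE.ne
      (eqOn_zero_Iic_of_setIntegral_Iic_eq_zero h.1.continuous h.2.1 h.2.2.1.integrableOn ha)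
      (fun t ht ↦ (hm_nonneg t).lt_of_ne' fun h0 ↦ not_le.2 ht (le_csSup hZ_bdd h0)) hε
  · push Not at hZ
    exact h.exists_pos_tauC_le_of_tendsto
      (Eventually.of_forall fun t ↦ (hm_nonneg t).lt_of_ne' (hZ t))
      (tendsto_setLIntegral_Iic_atBot hE.ne) hε

end Profiles

theorem natCast_div_two_pow_mem_of_midpoint_mem {S : Set ℝ} (h₀ : 0 ∈ S) (h₁ : 1 ∈ S)
    (hmid : ∀ x ∈ S, ∀ y ∈ S, (x + y) / 2 ∈ S) {n k : ℕ} (hk : k ≤ 2 ^ n) :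
    (k : ℝ) / 2 ^ n ∈ S := by
  induction n generalizing k with
  | zero => interval_cases k <;> simpa
  | succ n ih =>
    obtain ⟨j, rfl | rfl⟩ := Nat.even_or_odd' k
    · convert ih (k := j) (by omega) using 1
      push_cast; ring
    · convert hmid _ (ih (k := j) (by omega)) _ (ih (k := j + 1) (by omega)) using 1
      push_cast; ring

theorem tendsto_natCeil_mul_two_pow_div_two_pow {x : ℝ} (hx : 0 ≤ x) :
    Tendsto (fun n : ℕ ↦ (⌈x * 2 ^ n⌉₊ : ℝ) / 2 ^ n) atTop (𝓝 x) := by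
  have hup : Tendsto (fun n : ℕ ↦ x + (1 / 2 : ℝ) ^ n) atTop (𝓝 x) := by
    simpa using tendsto_const_nhds.add
      (tendsto_pow_atTop_nhds_zero_of_lt_one (by norm_num : (0 : ℝ) ≤ 1 / 2) (by norm_num))
  refine tendsto_of_tendsto_of_tendsto_of_le_of_le tendsto_const_nhds hup (fun n ↦ ?_) fun n ↦ ?_
  · rw [le_div_iff₀ (by positivity)]
    exact Nat.le_ceil _
  · rw [div_le_iff₀ (by positivity), add_mul, one_div_pow, one_div_mul_cancel (by positivity)]
    exact (Nat.ceil_lt_add_one (by positivity)).le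

section MidpointConcave

variable {f : ℝ → ℝ}

theorem monotoneOn_Ici_of_midpoint (h₀ : f 0 ≤ 0) (hnn : ∀ x, 0 < x → 0 ≤ f x)
    (hmid : ∀ x y, 0 < x → 0 < y → f x + f y ≤ 2 * f ((x + y) / 2)) :
    MonotoneOn f (Ici 0) := by
  have key (n : ℕ) : ∀ a b, 0 < a → a ≤ b → (1 - (1 / 2 : ℝ) ^ n) * f a ≤ f b := by
    induction n with
    | zero => intro a b ha hab; simpa using hnn b (ha.trans_le hab)
    | succ n ih =>
      intro a b ha hab
      have h₁ := hmid a (2 * b - a) ha (by linarith)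
      have h₂ := ih a (2 * b - a) ha (by linarith)
      rw [show (a + (2 * b - a)) / 2 = b by ring] at h₁
      rw [pow_succ]
      nlinarith
  intro a (ha : 0 ≤ a) b (hb : 0 ≤ b) hab
  rcases ha.eq_or_lt with rfl | ha
  · rcases hb.eq_or_lt with rfl | hb
    · exact le_rfl
    · exact h₀.trans (hnn b hb)
  · have hlim : Tendsto (fun n : ℕ ↦ (1 - (1 / 2 : ℝ) ^ n) * f a) atTop (𝓝 (f a)) := by
      simpa using ((tendsto_const_nhds (x := (1 : ℝ))).sub (tendsto_pow_atTop_nhds_zero_of_lt_one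
        (by norm_num : (0 : ℝ) ≤ 1 / 2) (by norm_num))).mul_const (f a)
    exact le_of_tendsto' hlim fun n ↦ key n a b ha hab

theorem concaveOn_Ioi_of_midpoint (hmono : MonotoneOn f (Ioi 0))
    (hmid : ∀ x y, 0 < x → 0 < y → f x + f y ≤ 2 * f ((x + y) / 2)) :
    ConcaveOn ℝ (Ioi 0) f := by
  refine LinearOrder.concaveOn_of_lt (convex_Ioi 0)
    fun x (hx : 0 < x) y (hy : 0 < y) hxy p q hp hq hpq ↦ ?_
  obtain rfl : q = 1 - p := by linarith
  simp only [smul_eq_mul]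
  set S := {l : ℝ | l ∈ Icc 0 1 ∧ l * f x + (1 - l) * f y ≤ f (l * x + (1 - l) * y)}
  have hcombo_pos {l : ℝ} (hl : l ∈ Icc (0 : ℝ) 1) : 0 < l * x + (1 - l) * y := by
    rcases hl.1.eq_or_lt with rfl | hl₀
    · simpa using hy
    · nlinarith [hl.2]
  have hS : ∀ l ∈ S, ∀ m ∈ S, (l + m) / 2 ∈ S := by
    rintro l ⟨hl, hl'⟩ m ⟨hm, hm'⟩
    refine ⟨⟨by linarith [hl.1, hm.1], by linarith [hl.2, hm.2]⟩, ?_⟩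
    have := hmid _ _ (hcombo_pos hl) (hcombo_pos hm)
    rw [show (l * x + (1 - l) * y + (m * x + (1 - m) * y)) / 2
      = (l + m) / 2 * x + (1 - (l + m) / 2) * y by ring] at this
    linarith
  -- dyadic weights `μ n ≥ p` move the point towards `x < y`, so by monotonicity they only help
  set μ := fun n : ℕ ↦ (⌈p * 2 ^ n⌉₊ : ℝ) / 2 ^ n
  have hμS (n : ℕ) : μ n ∈ S := by
    refine natCast_div_two_pow_mem_of_midpoint_mem (by simp [S]) (by simp [S]) hS ?_
    rw [Nat.ceil_le]
    push_cast
    nlinarith [pow_pos (two_pos : (0 : ℝ) < 2) n]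
  have hμp (n : ℕ) : p ≤ μ n := by
    rw [le_div_iff₀ (by positivity)]
    exact Nat.le_ceil _
  have hbound (n : ℕ) : μ n * f x + (1 - μ n) * f y ≤ f (p * x + (1 - p) * y) :=
    (hμS n).2.trans (hmono (hcombo_pos (hμS n).1) (hcombo_pos ⟨hp.le, by linarith⟩)
      (by nlinarith [hμp n]))
  have hlim := tendsto_natCeil_mul_two_pow_div_two_pow hp.le
  exact le_of_tendsto' ((hlim.mul_const _).add ((tendsto_const_nhds.sub hlim).mul_const _)) hbound

theorem ConcaveOn.concaveOn_Ici_of_nonneg (hf : ConcaveOn ℝ (Ioi 0) f) (h₀ : f 0 ≤ 0)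
    (hnn : ∀ x, 0 < x → 0 ≤ f x) : ConcaveOn ℝ (Ici 0) f := by
  refine LinearOrder.concaveOn_of_lt (convex_Ici 0)
    fun x (hx : 0 ≤ x) y (hy : 0 ≤ y) hxy p q hp hq hpq ↦ ?_
  rcases hx.eq_or_lt with rfl | hx
  · have hy : 0 < y := hxy
    simp only [smul_eq_mul, mul_zero, zero_add]
    suffices q * f y ≤ f (q * y) by nlinarith
    -- concavity on `u < q * y < y`, dropping the term `f u ≥ 0`; then let `u ↓ 0`
    have key : ∀ u ∈ Ioo 0 (q * y), (q * y - u) / (y - u) * f y ≤ f (q * y) := by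
      rintro u ⟨hu, huq⟩
      have hyu : 0 < y - u := by nlinarith
      have hr : 0 ≤ (y - q * y) / (y - u) := div_nonneg (by nlinarith) hyu.le
      have hr' : 0 ≤ (q * y - u) / (y - u) := div_nonneg (by linarith) hyu.le
      have h := hf.2 (mem_Ioi.2 hu) (mem_Ioi.2 hy) hr hr' (by field_simp; ring)
      have hcombo : (y - q * y) / (y - u) * u + (q * y - u) / (y - u) * y = q * y := by
        field_simp; ring
      simp only [smul_eq_mul, hcombo] at h
      nlinarith [mul_nonneg hr (hnn u hu)]
    have hlim : Tendsto (fun u ↦ (q * y - u) / (y - u) * f y) (𝓝[>] 0) (𝓝 (q * f y)) := by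
      have hcont : ContinuousAt (fun u ↦ (q * y - u) / (y - u) * f y) 0 :=
        (((continuousAt_const.sub continuousAt_id).div (continuousAt_const.sub continuousAt_id)
          (by simpa using hy.ne')).mul continuousAt_const)
      simpa [hy.ne'] using hcont.tendsto.mono_left nhdsWithin_le_nhds
    exact le_of_tendsto hlim (eventually_of_mem (Ioo_mem_nhdsGT (by positivity)) key)
  · exact hf.2 hx (hx.trans hxy) hp.le hq.le hpq

theorem MonotoneOn.continuousWithinAt_Ici_of_forall_exists_le {a : ℝ}
    (hf : MonotoneOn f (Ici a)) (h : ∀ ε > 0, ∃ x > a, f x ≤ f a + ε) :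
    ContinuousWithinAt f (Ici a) a := by
  refine tendsto_order.2 ⟨fun b hb ↦ ?_, fun b hb ↦ ?_⟩
  · filter_upwards [self_mem_nhdsWithin] with x hx
    exact hb.trans_le (hf self_mem_Ici hx hx)
  · obtain ⟨x, hx, hfx⟩ := h ((b - f a) / 2) (by linarith)
    filter_upwards [self_mem_nhdsWithin, mem_nhdsWithin_of_mem_nhds (Iio_mem_nhds hx)]
      with z hz hzx
    linarith [hf hz (mem_Ici.2 hx.le) (le_of_lt hzx)]

end MidpointConcave

theorem toReal_tauC_add_le {c : ℝ → ℝ} {u v : ℝ} (hu : 0 < u) (hv : 0 < v)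
    (hfin : tauC c ((u + v) / 2) ≠ ⊤) :
    (tauC c u).toReal + (tauC c v).toReal ≤ 2 * (tauC c ((u + v) / 2)).toReal := by
  have h := tauC_add_tauC_le_two_mul (c := c) hu hv
  have hsum : tauC c u + tauC c v ≠ ⊤ := ne_top_of_le_ne_top (by finiteness) h
  rw [← ENNReal.toReal_add (ENNReal.add_ne_top.1 hsum).1 (ENNReal.add_ne_top.1 hsum).2]
  simpa using ENNReal.toReal_mono (by finiteness) h

theorem induced_transport_cost_is_admissible_general
    (c : ℝ → ℝ)
    (hc0 : c 0 = 0)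
    (hfin : ∀ w : ℝ, 0 < w → tauC c w < ⊤)
    (τ : ℝ → ℝ) (hτ : ∀ w, τ w = (tauC c w).toReal) :
    (∀ w ∈ Ici (0:ℝ), 0 ≤ τ w) ∧
    τ 0 = 0 ∧
    MonotoneOn τ (Ici 0) ∧
    ConcaveOn ℝ (Ici 0) τ ∧
    ContinuousOn τ (Ici 0) := by
  have hτ0 : τ 0 = 0 := by rw [hτ, tauC_zero hc0, ENNReal.toReal_zero]
  have hnn (w : ℝ) : 0 ≤ τ w := hτ w ▸ ENNReal.toReal_nonneg
  have hmid (u v : ℝ) (hu : 0 < u) (hv : 0 < v) : τ u + τ v ≤ 2 * τ ((u + v) / 2) := by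
    simpa only [hτ] using toReal_tauC_add_le hu hv (hfin _ (by positivity)).ne
  have hmono := monotoneOn_Ici_of_midpoint hτ0.le (fun w _ ↦ hnn w) hmid
  have hconc := (concaveOn_Ioi_of_midpoint (hmono.mono Ioi_subset_Ici_self)
    hmid).concaveOn_Ici_of_nonneg hτ0.le fun w _ ↦ hnn w
  have hsmall (ε : ℝ) (hε : 0 < ε) : ∃ w > 0, τ w ≤ τ 0 + ε := by
    obtain ⟨w, hw, hτw⟩ :=
      exists_pos_tauC_le hc0 one_pos (hfin 1 one_pos).ne (ENNReal.ofReal_pos.2 hε)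
    refine ⟨w, hw, ?_⟩
    rw [hτ0, zero_add, hτ]
    exact ENNReal.toReal_le_of_le_ofReal hε.le hτw
  exact ⟨fun w _ ↦ hnn w, hτ0, hmono, hconc,
    hconc.continuousOn_Ici (hmono.continuousWithinAt_Ici_of_forall_exists_le hsmall)⟩

/-- the transport cost induced by a Borel measurable phase field cost
is admissible. -/
theorem induced_transport_cost_is_admissible
    (c : ℝ → ℝ) (hc : Measurable c)
    (hcnn : ∀ φ ∈ Ici (0:ℝ), 0 ≤ c φ)
    (hc0 : c 0 = 0)
    (hfin : ∀ w : ℝ, 0 < w → tauC c w < ⊤)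
    (τ : ℝ → ℝ) (hτ : ∀ w, τ w = (tauC c w).toReal) :
    (∀ w ∈ Ici (0:ℝ), 0 ≤ τ w) ∧
    τ 0 = 0 ∧
    MonotoneOn τ (Ici 0) ∧
    ConcaveOn ℝ (Ici 0) τ ∧
    ContinuousOn τ (Ici 0) :=
  induced_transport_cost_is_admissible_general c hc0 hfin τ hτ
end

section
/- Let z : [0,∞) → [0,∞] be nonincreasing and lower semicontinuous, and let z^{-1}(x) = inf{ y ∈ [0,∞) : z(y) ≤ x } (with inf ∅ = ∞) be its generalized inverse. Then: (i) z^{-1} is nonincreasing and lower semicontinuous; (ii) the generalized inverse of z^{-1} equals z, i.e. (z^{-1})^{-1} = z; (iii) ∫_0^∞ z(y) dy = ∫_0^∞ z^{-1}(x) dx (both possibly infinite). -/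
open MeasureTheory Filter Set
open scoped ENNReal Topology

/-! For `x, y ≥ 0` one has the duality `z⁻¹(x) ≤ y ↔ z(y) ≤ x`: lower semicontinuity makes
`{t ≥ 0 | z t ≤ x}` closed and monotonicity makes it an up-set of `[0,∞)`, so it is the interval
`[z⁻¹(x), ∞)`. Each property of `z⁻¹` follows from this duality alone: the sublevel set
`{x ≥ 0 | z⁻¹(x) ≤ y}` is `{x ≥ 0 | z(y) ≤ x}`, hence closed; the inverse of `z⁻¹` is `z`; and
both integrals are the area of `{(y, x) | y < z⁻¹(x)} = {(y, x) | x < z(y)}`, by Tonelli. -/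

/-- Generalized inverse of an extended-real-valued function on `[0,∞)`:
`z⁻¹(x) = inf { y ≥ 0 | z(y) ≤ x }`, with value `∞` for the empty set. -/
noncomputable def genInvE (z : ℝ → ℝ≥0∞) (x : ℝ≥0∞) : ℝ≥0∞ :=
  sInf {t : ℝ≥0∞ | ∃ y : ℝ, 0 ≤ y ∧ t = ENNReal.ofReal y ∧ z y ≤ x}

theorem lowerSemicontinuousOn_iff_isClosed_inter_preimage_Iic {α γ : Type*}
    [TopologicalSpace α] [LinearOrder γ] {f : α → γ} {s : Set α} (hs : IsClosed s) :
    LowerSemicontinuousOn f s ↔ ∀ b, IsClosed (s ∩ f ⁻¹' Iic b) := by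
  rw [lowerSemicontinuousOn_iff_preimage_Iic]
  refine ⟨fun h b => ?_, fun h b => ⟨_, h b, by rw [← inter_assoc, inter_self]⟩⟩
  obtain ⟨v, hv, hsv⟩ := h b
  exact hsv ▸ hs.inter hv

theorem volume_ofReal_lt_inter_Ioi (a : ℝ≥0∞) :
    volume ({t : ℝ | ENNReal.ofReal t < a} ∩ Ioi 0) = a := by
  rcases eq_or_ne a ⊤ with rfl | ha
  · simp [Real.volume_Ioi]
  · have hset : {t : ℝ | ENNReal.ofReal t < a} ∩ Ioi 0 = Ioo 0 a.toReal := by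
      ext t
      simp only [mem_inter_iff, mem_ofPred_eq, mem_Ioi, mem_Ioo]
      exact ⟨fun ⟨h, ht⟩ => ⟨ht, (ENNReal.ofReal_lt_iff_lt_toReal ht.le ha).1 h⟩,
        fun ⟨ht, h⟩ => ⟨(ENNReal.ofReal_lt_iff_lt_toReal ht.le ha).2 h, ht⟩⟩
    rw [hset, Real.volume_Ioo, sub_zero, ENNReal.ofReal_toReal ha]

section GenInv

variable {z : ℝ → ℝ≥0∞} {X : ℝ≥0∞} {y : ℝ}

theorem genInvE_le_ofReal (hy : 0 ≤ y) (h : z y ≤ X) : genInvE z X ≤ ENNReal.ofReal y :=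
  sInf_le ⟨y, hy, rfl, h⟩

theorem genInvE_antitone (z : ℝ → ℝ≥0∞) : Antitone (genInvE z) := fun _ _ hX =>
  sInf_le_sInf fun _ ⟨y, hy, ht, hzy⟩ => ⟨y, hy, ht, hzy.trans hX⟩

theorem le_of_genInvE_le_ofReal (hzmono : AntitoneOn z (Ici 0))
    (hzlsc : LowerSemicontinuousOn z (Ici 0)) (hy : 0 ≤ y)
    (h : genInvE z X ≤ ENNReal.ofReal y) : z y ≤ X := by
  set S := Ici (0 : ℝ) ∩ z ⁻¹' Iic X
  have hS_closed : IsClosed S :=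
    (lowerSemicontinuousOn_iff_isClosed_inter_preimage_Iic isClosed_Ici).1 hzlsc X
  have hS_bdd : BddBelow S := ⟨0, fun _ ht => ht.1⟩
  obtain ⟨_, ⟨t, ht, -, hzt⟩, -⟩ := sInf_lt_iff.1 (h.trans_lt ENNReal.ofReal_lt_top)
  have hmin : sInf S ∈ S := hS_closed.csInf_mem ⟨t, ht, hzt⟩ hS_bdd
  have hS_le : ENNReal.ofReal (sInf S) ≤ genInvE z X :=
    le_sInf fun _ ⟨t, ht, hteq, hzt⟩ => hteq ▸ ENNReal.ofReal_le_ofReal (csInf_le hS_bdd ⟨ht, hzt⟩)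
  have hmin_le : sInf S ≤ y := (ENNReal.ofReal_le_ofReal_iff hy).1 (hS_le.trans h)
  exact (hzmono hmin.1 hy hmin_le).trans hmin.2

theorem genInvE_le_ofReal_iff (hzmono : AntitoneOn z (Ici 0))
    (hzlsc : LowerSemicontinuousOn z (Ici 0)) (hy : 0 ≤ y) :
    genInvE z X ≤ ENNReal.ofReal y ↔ z y ≤ X :=
  ⟨le_of_genInvE_le_ofReal hzmono hzlsc hy, genInvE_le_ofReal hy⟩

end GenInv

section Duality

variable {z g : ℝ → ℝ≥0∞}

theorem lowerSemicontinuousOn_of_le_ofReal_iff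
    (hg : ∀ x y, 0 ≤ x → 0 ≤ y → (g x ≤ ENNReal.ofReal y ↔ z y ≤ ENNReal.ofReal x)) :
    LowerSemicontinuousOn g (Ici 0) := by
  refine (lowerSemicontinuousOn_iff_isClosed_inter_preimage_Iic isClosed_Ici).2 fun c => ?_
  rcases eq_or_ne c ⊤ with rfl | hc
  · simpa using isClosed_Ici
  · have hset : Ici 0 ∩ g ⁻¹' Iic c = Ici 0 ∩ ENNReal.ofReal ⁻¹' Ici (z c.toReal) := by
      ext x
      refine and_congr_right fun hx => ?_
      simpa [ENNReal.ofReal_toReal hc] using hg x c.toReal hx ENNReal.toReal_nonneg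
    rw [hset]
    exact isClosed_Ici.inter (isClosed_Ici.preimage ENNReal.continuous_ofReal)

theorem genInvE_ofReal_eq_of_le_ofReal_iff
    (hg : ∀ x y, 0 ≤ x → 0 ≤ y → (g x ≤ ENNReal.ofReal y ↔ z y ≤ ENNReal.ofReal x))
    (hy : 0 ≤ y) : genInvE g (ENNReal.ofReal y) = z y := by
  refine le_antisymm ?_ (le_sInf fun _ ⟨x, hx, hteq, hgx⟩ => hteq ▸ (hg x y hx hy).1 hgx)
  rcases eq_or_ne (z y) ⊤ with htop | htop
  · exact htop ▸ le_top
  · have hgz : g (z y).toReal ≤ ENNReal.ofReal y :=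
      (hg _ y ENNReal.toReal_nonneg hy).2 (ENNReal.ofReal_toReal htop).ge
    exact (genInvE_le_ofReal ENNReal.toReal_nonneg hgz).trans_eq (ENNReal.ofReal_toReal htop)

theorem setLIntegral_Ioi_eq_of_le_ofReal_iff (hgm : Measurable g)
    (hg : ∀ x y, 0 ≤ x → 0 ≤ y → (g x ≤ ENNReal.ofReal y ↔ z y ≤ ENNReal.ofReal x)) :
    ∫⁻ y in Ioi (0 : ℝ), z y = ∫⁻ x in Ioi (0 : ℝ), g x := by
  set μ := volume.restrict (Ioi (0 : ℝ))
  set E := {p : ℝ × ℝ | ENNReal.ofReal p.1 < g p.2}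
  have hE : MeasurableSet E :=
    measurableSet_lt (ENNReal.measurable_ofReal.comp measurable_fst) (hgm.comp measurable_snd)
  have hslice_y : ∀ y ∈ Ioi (0 : ℝ), μ (Prod.mk y ⁻¹' E) = z y := by
    intro y hy
    rw [Measure.restrict_apply' measurableSet_Ioi, ← volume_ofReal_lt_inter_Ioi (z y)]
    congr 1
    ext x
    refine and_congr_left fun hx => ?_
    show ENNReal.ofReal y < g x ↔ ENNReal.ofReal x < z y
    simpa only [not_le] using (hg x y hx.le hy.le).not
  have hslice_x : ∀ x, μ ((fun y => (y, x)) ⁻¹' E) = g x := fun x => by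
    rw [Measure.restrict_apply' measurableSet_Ioi]
    exact volume_ofReal_lt_inter_Ioi (g x)
  calc ∫⁻ y in Ioi (0 : ℝ), z y = (μ.prod μ) E := by
        rw [Measure.prod_apply hE]
        exact (setLIntegral_congr_fun measurableSet_Ioi hslice_y).symm
    _ = ∫⁻ x in Ioi (0 : ℝ), g x := by
        rw [Measure.prod_apply_symm hE]
        simp only [hslice_x, μ]

end Duality

/-- properties of the generalized inverse of a nonincreasing lower
semicontinuous function `z : [0,∞) → [0,∞]`: it is nonincreasing and lower
semicontinuous, its generalized inverse is `z` again, and it has the same integral. -/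
theorem generalized_inverse_properties
    (z : ℝ → ℝ≥0∞)
    (hzmono : AntitoneOn z (Ici 0))
    (hzlsc : LowerSemicontinuousOn z (Ici 0))
    (zinv : ℝ → ℝ≥0∞) (hzinv : ∀ x, zinv x = genInvE z (ENNReal.ofReal x)) :
    (AntitoneOn zinv (Ici 0) ∧ LowerSemicontinuousOn zinv (Ici 0)) ∧
    (∀ y ∈ Ici (0:ℝ), genInvE zinv (ENNReal.ofReal y) = z y) ∧
    (∫⁻ y in Ioi (0:ℝ), z y) = ∫⁻ x in Ioi (0:ℝ), zinv x := by
  have hdual : ∀ x y, 0 ≤ x → 0 ≤ y → (zinv x ≤ ENNReal.ofReal y ↔ z y ≤ ENNReal.ofReal x) :=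
    fun x y _ hy => hzinv x ▸ genInvE_le_ofReal_iff hzmono hzlsc hy
  have hanti : Antitone zinv := by
    rw [show zinv = genInvE z ∘ ENNReal.ofReal from funext hzinv]
    exact (genInvE_antitone z).comp_monotone ENNReal.ofReal_mono
  exact ⟨⟨hanti.antitoneOn _, lowerSemicontinuousOn_of_le_ofReal_iff hdual⟩,
    fun y hy => genInvE_ofReal_eq_of_le_ofReal_iff hdual hy,
    setLIntegral_Ioi_eq_of_le_ofReal_iff hanti.measurable hdual⟩
end

section
/- Let z : [0,∞) → [0,∞) be nonincreasing and lower semicontinuous, set c(φ) = z(φ)·φ, assume ∫_0^1 √(c(φ)) dφ < ∞, and let τ = τ^c. Suppose that for some W > 0 one has τ(w) = L·w for all w ∈ [0,W], where L = lim_{v→0+} τ(v)/v. Then for every w ∈ (0,W) there is NO minimizer: no nonnegative ψ ∈ H¹(ℝ) with ∫_ℝ ψ dy = w satisfies F^c[ψ] = τ(w). -/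
/-!
Stretching a profile horizontally by `l`, `ψ ↦ ψ (· / l)`, multiplies its mass and its
potential energy `∫ c(ψ)` by `l` and divides its Dirichlet energy `∫ ½ ψ'²` by `l`. If `ψ` were
a minimizer of mass `w < W` with Dirichlet energy `D` and potential energy `P`, then for
`l = W / w > 1` linearity of `τ` gives `l (D + P) = L W = τ(W) ≤ D / l + l P`, forcing `D = 0`.
So `ψ` is constant, and an integrable constant on `ℝ` is zero, contradicting `w > 0`.
-/

open MeasureTheory Filter Set
open scoped ENNReal Topology

lemma map_volume_div {l : ℝ} (hl : l ≠ 0) :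
    Measure.map (· / l) volume = ENNReal.ofReal |l| • volume := by
  simpa only [div_eq_mul_inv, inv_inv] using Real.map_volume_mul_right (inv_ne_zero hl)

lemma lintegral_comp_div (g : ℝ → ℝ≥0∞) {l : ℝ} (hl : l ≠ 0) :
    ∫⁻ y, g (y / l) = ENNReal.ofReal |l| * ∫⁻ y, g y := by
  have h :=
    lintegral_map_equiv (μ := volume) g (MeasurableEquiv.mulRight₀ l⁻¹ (inv_ne_zero hl))
  simp only [MeasurableEquiv.coe_mulRight₀, ← div_eq_mul_inv, map_volume_div hl,
    lintegral_smul_measure] at h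
  exact h.symm

lemma MeasureTheory.MemLp.comp_div {E : Type*} [NormedAddCommGroup E] {f : ℝ → E} {p : ℝ≥0∞}
    (hf : MemLp f p volume) {l : ℝ} (hl : l ≠ 0) : MemLp (fun y => f (y / l)) p volume := by
  have hmap : MemLp f p (Measure.map (· / l) volume) := by
    rw [map_volume_div hl]
    exact hf.smul_measure ENNReal.ofReal_ne_top
  exact hmap.comp_of_map (measurable_id.div_const l).aemeasurable

namespace MemH1

variable {ψ dψ : ℝ → ℝ}

lemma comp_div (h : MemH1 ψ dψ) {l : ℝ} (hl : l ≠ 0) :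
    MemH1 (fun y => ψ (y / l)) (fun y => dψ (y / l) / l) := by
  obtain ⟨hψ, hdψ, hftc⟩ := h
  refine ⟨hψ.comp_div hl,
    by simpa only [div_eq_mul_inv] using (hdψ.comp_div hl).mul_const l⁻¹, fun t => ?_⟩
  simp only
  rw [intervalIntegral.integral_div, intervalIntegral.integral_comp_div dψ hl, zero_div,
    hftc (t / l), smul_eq_mul, mul_div_cancel_left₀ _ hl]

lemma eq_zero_of_deriv_ae_eq_zero (h : MemH1 ψ dψ) (hψ : Integrable ψ)
    (hdψ : dψ =ᵐ[volume] 0) : ψ = 0 := by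
  have hconst : ∀ t, ψ t = ψ 0 := fun t => by
    rw [h.2.2 t, intervalIntegral.integral_congr_ae (hdψ.mono fun x hx _ => hx)]
    simp
  have hint : Integrable (fun _ : ℝ => ψ 0) := hψ.congr (Eventually.of_forall hconst)
  funext t
  rw [hconst t]
  exact (integrable_const_iff.mp hint).resolve_right fun h => by
    simpa using h.measure_univ_lt_top

end MemH1

noncomputable def dirichletEnergy (dψ : ℝ → ℝ) : ℝ≥0∞ :=
  ∫⁻ y, ENNReal.ofReal ((1/2) * dψ y ^ 2)

/- `c ∘ ψ` need not be measurable: `lintegral` is a lower integral, which still splits off the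
measurable gradient term and rescales under `y ↦ y / l`. -/
noncomputable def potentialEnergy (c ψ : ℝ → ℝ) : ℝ≥0∞ :=
  ∫⁻ y, ENNReal.ofReal (c (ψ y))

lemma phaseEnergy_eq_add {c ψ dψ : ℝ → ℝ} (hdψ : AEMeasurable dψ) (hc : ∀ y, 0 ≤ c (ψ y)) :
    phaseEnergy c ψ dψ = dirichletEnergy dψ + potentialEnergy c ψ := by
  have hD : AEMeasurable fun y => ENNReal.ofReal ((1/2) * dψ y ^ 2) := by fun_prop
  rw [phaseEnergy, dirichletEnergy, potentialEnergy, ← lintegral_add_left' hD]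
  congr 1 with y
  exact ENNReal.ofReal_add (by positivity) (hc y)

lemma dirichletEnergy_comp_div (dψ : ℝ → ℝ) {l : ℝ} (hl : 0 < l) :
    dirichletEnergy (fun y => dψ (y / l) / l) = ENNReal.ofReal l⁻¹ * dirichletEnergy dψ := by
  have hscale : ∀ u, ENNReal.ofReal ((1/2) * (dψ u / l) ^ 2)
      = ENNReal.ofReal (l ^ 2)⁻¹ * ENNReal.ofReal ((1/2) * dψ u ^ 2) := fun u => by
    rw [← ENNReal.ofReal_mul (by positivity)]
    congr 1
    field_simp
  simp only [dirichletEnergy, hscale]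
  rw [lintegral_const_mul' _ _ ENNReal.ofReal_ne_top,
    lintegral_comp_div (fun u => ENNReal.ofReal ((1/2) * dψ u ^ 2)) hl.ne', ← mul_assoc,
    ← ENNReal.ofReal_mul (by positivity), abs_of_pos hl]
  congr 2
  field_simp

lemma potentialEnergy_comp_div (c ψ : ℝ → ℝ) {l : ℝ} (hl : 0 < l) :
    potentialEnergy c (fun y => ψ (y / l)) = ENNReal.ofReal l * potentialEnergy c ψ := by
  rw [potentialEnergy, lintegral_comp_div (fun u => ENNReal.ofReal (c (ψ u))) hl.ne',
    abs_of_pos hl, potentialEnergy]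

lemma MeasureTheory.MemLp.dirichletEnergy_lt_top {dψ : ℝ → ℝ} (hdψ : MemLp dψ 2 volume) :
    dirichletEnergy dψ < ⊤ :=
  (((memLp_two_iff_integrable_sq hdψ.aestronglyMeasurable).mp hdψ).const_mul _).lintegral_lt_top

lemma dirichletEnergy_eq_zero_iff {dψ : ℝ → ℝ} (hdψ : AEMeasurable dψ) :
    dirichletEnergy dψ = 0 ↔ dψ =ᵐ[volume] 0 := by
  rw [dirichletEnergy, lintegral_eq_zero_iff' (by fun_prop)]
  refine eventually_congr (Eventually.of_forall fun y => ?_)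
  simp only [Pi.zero_apply, ENNReal.ofReal_eq_zero]
  exact ⟨fun h => by nlinarith [sq_nonneg (dψ y)], fun h => by simp [h]⟩

lemma potentialEnergy_lt_top {c ψ : ℝ → ℝ} {K : ℝ} (hc : ∀ y, c (ψ y) ≤ K * ψ y)
    (hψ : Integrable ψ) : potentialEnergy c ψ < ⊤ :=
  (lintegral_mono fun y => ENNReal.ofReal_le_ofReal (hc y)).trans_lt
    (hψ.const_mul K).lintegral_lt_top

lemma tauC_mul_le {c ψ dψ : ℝ → ℝ} {w l : ℝ} (h : MemH1 ψ dψ) (hψ : ∀ y, 0 ≤ ψ y)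
    (hint : Integrable ψ) (hmass : ∫ y, ψ y = w) (hc : ∀ y, 0 ≤ c (ψ y)) (hl : 0 < l) :
    tauC c (l * w) ≤
      ENNReal.ofReal l⁻¹ * dirichletEnergy dψ + ENNReal.ofReal l * potentialEnergy c ψ := by
  have hmass' : ∫ y, ψ (y / l) = l * w := by
    rw [Measure.integral_comp_div, hmass, abs_of_pos hl, smul_eq_mul]
  have hdψ : AEMeasurable fun y => dψ (y / l) / l :=
    (h.comp_div hl.ne').2.1.aestronglyMeasurable.aemeasurable
  calc tauC c (l * w) ≤ phaseEnergy c (fun y => ψ (y / l)) (fun y => dψ (y / l) / l) :=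
        iInf₂_le (_, _) ⟨h.comp_div hl.ne', fun y => hψ _, hint.comp_div hl.ne', hmass'⟩
    _ = _ := by
      rw [phaseEnergy_eq_add hdψ fun y => hc _, dirichletEnergy_comp_div _ hl,
        potentialEnergy_comp_div _ _ hl]

theorem nonexistence_of_minimizer_for_linear_tau_general
    (z : ℝ → ℝ) (hznn : ∀ φ ∈ Ici (0:ℝ), 0 ≤ z φ)
    (hzmono : AntitoneOn z (Ici 0))
    (c : ℝ → ℝ) (hcz : ∀ φ, c φ = z φ * φ)
    (τ : ℝ → ℝ) (hτ : ∀ v, τ v = (tauC c v).toReal)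
    (L : ℝ)
    (W : ℝ)
    (hlin : ∀ w ∈ Icc (0:ℝ) W, τ w = L * w) :
    ∀ w ∈ Ioo (0:ℝ) W,
      ¬ ∃ ψ dψ : ℝ → ℝ, MemH1 ψ dψ ∧ (∀ y, 0 ≤ ψ y) ∧ Integrable ψ ∧
        (∫ y, ψ y) = w ∧ phaseEnergy c ψ dψ = tauC c w := by
  rintro w ⟨hw, hwW⟩ ⟨ψ, dψ, hH1, hψ, hint, hmass, hmin⟩
  have hc : ∀ y, 0 ≤ c (ψ y) := fun y => by
    rw [hcz]; exact mul_nonneg (hznn _ (hψ y)) (hψ y)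
  have hcK : ∀ y, c (ψ y) ≤ z 0 * ψ y := fun y => by
    rw [hcz]; exact mul_le_mul_of_nonneg_right (hzmono self_mem_Ici (hψ y) (hψ y)) (hψ y)
  have hdψ := hH1.2.1.aestronglyMeasurable.aemeasurable
  have hD := hH1.2.1.dirichletEnergy_lt_top.ne
  have hP := (potentialEnergy_lt_top hcK hint).ne
  set l := W / w
  have hl : 1 < l := (one_lt_div hw).mpr hwW
  have hscale := tauC_mul_le hH1 hψ hint hmass hc (zero_lt_one.trans hl)
  rw [div_mul_cancel₀ W hw.ne'] at hscale
  have hτw : L * w = (dirichletEnergy dψ).toReal + (potentialEnergy c ψ).toReal := by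
    rw [← hlin w ⟨hw.le, hwW.le⟩, hτ, ← hmin, phaseEnergy_eq_add hdψ hc, ENNReal.toReal_add hD hP]
  have hτW :
      L * (l * w) ≤ l⁻¹ * (dirichletEnergy dψ).toReal + l * (potentialEnergy c ψ).toReal := by
    rw [div_mul_cancel₀ W hw.ne', ← hlin W ⟨hw.le.trans hwW.le, le_rfl⟩, hτ]
    refine (ENNReal.toReal_mono (by finiteness) hscale).trans_eq ?_
    rw [ENNReal.toReal_add (by finiteness) (by finiteness), ENNReal.toReal_mul,
      ENNReal.toReal_mul, ENNReal.toReal_ofReal (by positivity),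
      ENNReal.toReal_ofReal (by positivity)]
  have hD0 : (dirichletEnergy dψ).toReal = 0 := by
    have : 0 < l - l⁻¹ := sub_pos.mpr ((inv_lt_one_of_one_lt₀ hl).trans hl)
    nlinarith [ENNReal.toReal_nonneg (a := dirichletEnergy dψ)]
  have hψ0 : ψ = 0 := hH1.eq_zero_of_deriv_ae_eq_zero hint <|
    (dirichletEnergy_eq_zero_iff hdψ).mp (((ENNReal.toReal_eq_zero_iff _).mp hD0).resolve_right hD)
  simp [hψ0] at hmass
  exact hw.ne hmass

/-- nonexistence of an optimal phase field profile in the region where `τ`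
is linear with the slope `L = τ'(0)`. -/
theorem nonexistence_of_minimizer_for_linear_tau
    (z : ℝ → ℝ) (hznn : ∀ φ ∈ Ici (0:ℝ), 0 ≤ z φ)
    (hzmono : AntitoneOn z (Ici 0))
    (hzlsc : LowerSemicontinuousOn z (Ici 0))
    (c : ℝ → ℝ) (hcz : ∀ φ, c φ = z φ * φ)
    (hcint : (∫⁻ φ in Ioc (0:ℝ) 1, ENNReal.ofReal (Real.sqrt (c φ))) < ⊤)
    (τ : ℝ → ℝ) (hτ : ∀ v, τ v = (tauC c v).toReal)
    (L : ℝ) (hL : Tendsto (fun v => τ v / v) (𝓝[>] 0) (𝓝 L))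
    (W : ℝ) (hW : 0 < W)
    (hlin : ∀ w ∈ Icc (0:ℝ) W, τ w = L * w) :
    ∀ w ∈ Ioo (0:ℝ) W,
      ¬ ∃ ψ dψ : ℝ → ℝ, MemH1 ψ dψ ∧ (∀ y, 0 ≤ ψ y) ∧ Integrable ψ ∧
        (∫ y, ψ y) = w ∧ phaseEnergy c ψ dψ = tauC c w :=
  nonexistence_of_minimizer_for_linear_tau_general z hznn hzmono c hcz τ hτ L W hlin
end

section
/- Let z : [0,∞) → [0,∞) be nonincreasing and lower semicontinuous, c(φ) = z(φ)·φ, τ = τ^c, and let w > 0 satisfy τ(w) ≠ w · lim_{v→0+} τ(v)/v. Let ψ̂ ∈ H¹(ℝ) be a bounded, continuous, even minimizer of F^c among nonnegative H¹ functions of mass w which is nonincreasing on [0,∞), and set λ = z(ψ̂(0)). Then: (i) ψ̂ minimizes ψ ↦ F^c[ψ] − λ ∫_ℝ ψ dy over all nonnegative ψ ∈ H¹(ℝ) which are even, nonincreasing on [0,∞), and satisfy ψ(0) = ψ̂(0); (ii) τ(w+h) − τ(w) ≤ λ·h for every h > 0 (λ is at least the right derivative of τ at w); (iii) τ(w) −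 τ(w−h) ≥ λ·h for every 0 < h < w (λ is at most the left derivative of τ at w). -/
open MeasureTheory Filter Set
open scoped ENNReal Topology

/-!
Write `θ = ψ̂(0)` and `λ = z(θ)`. Mass can be added at the price `λ` per unit: inserting a plateau
of height `θ` and length `s` at the peak adds mass `sθ` and energy `s·c(θ) = λsθ`. Mass can be
removed at a gain of at least `λ` per unit: for an even profile peaked at `0`, cutting out a
central slab `[-ℓ, ℓ)` and closing the gap is legitimate because `ψ(-ℓ) = ψ(ℓ)`, and the removed
energy dominates `λ` times the removed mass since `c(φ) = z(φ)φ ≥ λφ` for `0 ≤ φ ≤ θ`. Bringing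
any competitor of height `θ` to mass `v` in one of these two ways gives
`τ(v) + λ∫ψ ≤ F[ψ] + λv`; with `v = w` this is (i), and with `ψ = ψ̂`, `v = w ± h` it is (ii)
and (iii).
-/

def IsPrimitiveOf (ψ dψ : ℝ → ℝ) : Prop :=
  (∀ a b, IntervalIntegrable dψ volume a b) ∧ ∀ a b, ψ b = ψ a + ∫ s in a..b, dψ s

namespace IsPrimitiveOf

variable {f df g dg : ℝ → ℝ}

lemma of_eq_add_integral (hd : ∀ a b, IntervalIntegrable df volume a b) (x : ℝ)
    (h : ∀ t, f t = f x + ∫ s in x..t, df s) : IsPrimitiveOf f df := by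
  refine ⟨hd, fun a b => ?_⟩
  rw [h a, h b, add_assoc, ← intervalIntegral.integral_interval_sub_left (hd x b) (hd x a)]
  ring

lemma const (θ : ℝ) : IsPrimitiveOf (fun _ => θ) 0 :=
  ⟨fun _ _ => intervalIntegrable_const, fun _ _ => by simp⟩

lemma comp_add_right (h : IsPrimitiveOf f df) (d : ℝ) :
    IsPrimitiveOf (fun y => f (y + d)) (fun y => df (y + d)) :=
  ⟨fun a b => by simpa using (h.1 (a + d) (b + d)).comp_add_right d, fun a b => by
    simp only [intervalIntegral.integral_comp_add_right df d, h.2 (a + d) (b + d)]⟩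

lemma comp_sub_right (h : IsPrimitiveOf f df) (d : ℝ) :
    IsPrimitiveOf (fun y => f (y - d)) (fun y => df (y - d)) := by
  simpa only [sub_eq_add_neg] using h.comp_add_right (-d)

lemma piecewise_Iio (hf : IsPrimitiveOf f df) (hg : IsPrimitiveOf g dg) {x : ℝ}
    (hfg : f x = g x) :
    IsPrimitiveOf ((Iio x).piecewise f g) ((Iio x).piecewise df dg) := by
  refine of_eq_add_integral (fun a b => ?_) x fun t => ?_
  · have hf' := hf.1 a b
    have hg' := hg.1 a b
    rw [intervalIntegrable_iff] at *
    exact Integrable.piecewise measurableSet_Iio hf'.integrableOn hg'.integrableOn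
  · rw [piecewise_eq_of_notMem (Iio x) f g (lt_irrefl x)]
    rcases lt_or_ge t x with htx | hxt
    · rw [piecewise_eq_of_mem (Iio x) f g htx, hf.2 x t, hfg]
      congr 1
      refine intervalIntegral.integral_congr_ae ?_
      filter_upwards [Measure.ae_ne volume x] with y hyx hy
      rw [uIoc_of_ge htx.le] at hy
      exact (piecewise_eq_of_mem (Iio x) df dg (lt_of_le_of_ne hy.2 hyx)).symm
    · rw [piecewise_eq_of_notMem (Iio x) f g (not_lt.2 hxt), hg.2 x t]
      refine congrArg _ (intervalIntegral.integral_congr fun y hy => ?_)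
      rw [uIcc_of_le hxt] at hy
      exact (piecewise_eq_of_notMem (Iio x) df dg (not_lt.2 hy.1)).symm

end IsPrimitiveOf

lemma memH1_iff_s9 {ψ dψ : ℝ → ℝ} :
    MemH1 ψ dψ ↔ MemLp ψ 2 volume ∧ MemLp dψ 2 volume ∧ IsPrimitiveOf ψ dψ := by
  refine ⟨fun ⟨hψ, hdψ, h⟩ => ⟨hψ, hdψ, ?_⟩, fun ⟨hψ, hdψ, h⟩ => ⟨hψ, hdψ, h.2 0⟩⟩
  refine IsPrimitiveOf.of_eq_add_integral (fun a b => ?_) 0 h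
  exact ((hdψ.locallyIntegrable one_le_two).integrableOn_isCompact
    isCompact_uIcc).intervalIntegrable

lemma setIntegral_Iio_add_Ico_add_Ici {f : ℝ → ℝ} (hf : Integrable f) {a b : ℝ} (hab : a ≤ b) :
    (∫ y in Iio a, f y) + (∫ y in Ico a b, f y) + ∫ y in Ici b, f y = ∫ y, f y := by
  rw [← setIntegral_union ((Iio_disjoint_Ici le_rfl).mono_right Ico_subset_Ici_self)
    measurableSet_Ico hf.integrableOn hf.integrableOn, Iio_union_Ico_eq_Iio hab, ← compl_Iio,
    integral_add_compl measurableSet_Iio hf]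

lemma setLIntegral_Iio_add_Ico_add_Ici (F : ℝ → ℝ≥0∞) {a b : ℝ} (hab : a ≤ b) :
    (∫⁻ y in Iio a, F y) + (∫⁻ y in Ico a b, F y) + ∫⁻ y in Ici b, F y = ∫⁻ y, F y := by
  rw [← lintegral_union measurableSet_Ico
    ((Iio_disjoint_Ici le_rfl).mono_right Ico_subset_Ici_self), Iio_union_Ico_eq_Iio hab,
    ← compl_Iio, lintegral_add_compl F measurableSet_Iio]

lemma setIntegral_Ici_comp_add_right (f : ℝ → ℝ) (a d : ℝ) :
    ∫ y in Ici a, f (y + d) = ∫ y in Ici (a + d), f y := by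
  rw [← image_add_const_Ici, (measurePreserving_add_right volume d).setIntegral_image_emb
    (measurableEmbedding_addRight d)]

lemma setLIntegral_Ici_comp_add_right (F : ℝ → ℝ≥0∞) (a d : ℝ) :
    ∫⁻ y in Ici a, F (y + d) = ∫⁻ y in Ici (a + d), F y := by
  rw [← image_add_const_Ici, (measurePreserving_add_right volume d).setLIntegral_comp_emb
    (measurableEmbedding_addRight d)]

noncomputable def insertPlateau {α : Type*} (s : ℝ) (θ : α) (f : ℝ → α) : ℝ → α :=
  (Iio 0).piecewise f ((Iio s).piecewise (fun _ => θ) (fun y => f (y - s)))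

section insertPlateau

variable {α : Type*} {s : ℝ} {θ : α} {f : ℝ → α} {y : ℝ}

lemma insertPlateau_of_neg (hy : y < 0) : insertPlateau s θ f y = f y :=
  piecewise_eq_of_mem (Iio 0) _ _ hy

lemma insertPlateau_of_mem_Ico (hy : y ∈ Ico 0 s) : insertPlateau s θ f y = θ := by
  rw [insertPlateau, piecewise_eq_of_notMem (Iio 0) _ _ (not_lt.2 hy.1),
    piecewise_eq_of_mem (Iio s) _ _ hy.2]

lemma insertPlateau_of_le (hs : 0 ≤ s) (hy : s ≤ y) : insertPlateau s θ f y = f (y - s) := by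
  rw [insertPlateau, piecewise_eq_of_notMem (Iio 0) _ _ (not_lt.2 (hs.trans hy)),
    piecewise_eq_of_notMem (Iio s) _ _ (not_lt.2 hy)]

lemma apply_insertPlateau₂ {β γ : Type*} (Φ : α → β → γ) (θ' : β) (f' : ℝ → β) :
    (fun y => Φ (insertPlateau s θ f y) (insertPlateau s θ' f' y)) =
      insertPlateau s (Φ θ θ') (fun y => Φ (f y) (f' y)) := by
  funext y
  simp only [insertPlateau, Set.piecewise]
  split_ifs <;> rfl

lemma forall_insertPlateau {P : α → Prop} (hθ : P θ) (hf : ∀ y, P (f y)) :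
    ∀ y, P (insertPlateau s θ f y) := by
  intro y
  simp only [insertPlateau, Set.piecewise]
  split_ifs <;> simp only [hθ, hf]

end insertPlateau

lemma MeasureTheory.MemLp.insertPlateau {E : Type*} [NormedAddCommGroup E] {f : ℝ → E} {p : ℝ≥0∞}
    (hf : MemLp f p volume) (s : ℝ) (θ : E) : MemLp (insertPlateau s θ f) p volume := by
  have hshift := hf.comp_measurePreserving (measurePreserving_sub_right volume s)
  refine (hf.restrict _).piecewise measurableSet_Iio
    (MemLp.piecewise measurableSet_Iio ?_ ((hshift.restrict _).restrict _))
  have hsub : Iio s ∩ (Iio 0)ᶜ ⊆ Ico 0 s := fun y hy => ⟨not_lt.1 hy.2, hy.1⟩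
  rw [Measure.restrict_restrict measurableSet_Iio]
  exact (memLp_const θ).mono_measure (Measure.restrict_mono hsub le_rfl)

lemma MeasureTheory.Integrable.insertPlateau {f : ℝ → ℝ} (hf : Integrable f) (s θ : ℝ) :
    Integrable (insertPlateau s θ f) :=
  memLp_one_iff_integrable.1 ((memLp_one_iff_integrable.2 hf).insertPlateau s θ)

lemma integral_insertPlateau {f : ℝ → ℝ} (hf : Integrable f) {s : ℝ} (hs : 0 ≤ s) (θ : ℝ) :
    ∫ y, insertPlateau s θ f y = (∫ y, f y) + s * θ := by
  rw [← setIntegral_Iio_add_Ico_add_Ici (hf.insertPlateau s θ) hs,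
    ← integral_add_compl measurableSet_Iio hf, compl_Iio,
    setIntegral_congr_fun measurableSet_Iio fun y => insertPlateau_of_neg,
    setIntegral_congr_fun measurableSet_Ico fun y => insertPlateau_of_mem_Ico,
    setIntegral_congr_fun measurableSet_Ici fun y => insertPlateau_of_le hs]
  simp_rw [sub_eq_add_neg]
  rw [setIntegral_Ici_comp_add_right, add_neg_cancel, setIntegral_const,
    Real.volume_real_Ico_of_le hs, sub_zero, smul_eq_mul]
  ring

lemma lintegral_insertPlateau (F : ℝ → ℝ≥0∞) {s : ℝ} (hs : 0 ≤ s) (θ : ℝ≥0∞) :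
    ∫⁻ y, insertPlateau s θ F y = (∫⁻ y, F y) + ENNReal.ofReal s * θ := by
  rw [← setLIntegral_Iio_add_Ico_add_Ici _ hs, ← lintegral_add_compl F measurableSet_Iio,
    compl_Iio, setLIntegral_congr_fun measurableSet_Iio fun y => insertPlateau_of_neg,
    setLIntegral_congr_fun measurableSet_Ico fun y => insertPlateau_of_mem_Ico,
    setLIntegral_congr_fun measurableSet_Ici fun y => insertPlateau_of_le hs]
  simp_rw [sub_eq_add_neg]
  rw [setLIntegral_Ici_comp_add_right, add_neg_cancel, setLIntegral_const, Real.volume_Ico,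
    sub_zero]
  ring

lemma IsPrimitiveOf.insertPlateau {f df : ℝ → ℝ} (h : IsPrimitiveOf f df) {s : ℝ} (hs : 0 ≤ s) :
    IsPrimitiveOf (insertPlateau s (f 0) f) (insertPlateau s 0 df) :=
  h.piecewise_Iio ((IsPrimitiveOf.const (f 0)).piecewise_Iio (h.comp_sub_right s) (by simp))
    (by
      rcases hs.lt_or_eq with hs | rfl
      · exact (piecewise_eq_of_mem (Iio s) (fun _ => f 0) _ hs).symm
      · simp)

noncomputable def removeSlab {α : Type*} (a b : ℝ) (f : ℝ → α) : ℝ → α :=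
  (Iio a).piecewise f (fun y => f (y + (b - a)))

lemma apply_removeSlab₂ {α β γ : Type*} (Φ : α → β → γ) (a b : ℝ) (f : ℝ → α) (f' : ℝ → β) :
    (fun y => Φ (removeSlab a b f y) (removeSlab a b f' y)) =
      removeSlab a b (fun y => Φ (f y) (f' y)) := by
  funext y
  simp only [removeSlab, Set.piecewise]
  split_ifs <;> rfl

lemma forall_removeSlab {α : Type*} {P : α → Prop} {f : ℝ → α} (hf : ∀ y, P (f y)) {a b : ℝ} :
    ∀ y, P (removeSlab a b f y) := by
  intro y
  simp only [removeSlab, Set.piecewise]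
  split_ifs <;> exact hf _

lemma MeasureTheory.MemLp.removeSlab {E : Type*} [NormedAddCommGroup E] {f : ℝ → E} {p : ℝ≥0∞}
    (hf : MemLp f p volume) (a b : ℝ) : MemLp (removeSlab a b f) p volume :=
  (hf.restrict _).piecewise measurableSet_Iio
    ((hf.comp_measurePreserving (measurePreserving_add_right volume (b - a))).restrict _)

lemma MeasureTheory.Integrable.removeSlab {f : ℝ → ℝ} (hf : Integrable f) (a b : ℝ) :
    Integrable (removeSlab a b f) :=
  memLp_one_iff_integrable.1 ((memLp_one_iff_integrable.2 hf).removeSlab a b)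

lemma integral_removeSlab {f : ℝ → ℝ} (hf : Integrable f) {a b : ℝ} (hab : a ≤ b) :
    (∫ y, removeSlab a b f y) + ∫ y in Ico a b, f y = ∫ y, f y := by
  have hshift : Integrable fun y => f (y + (b - a)) :=
    (measurePreserving_add_right volume (b - a)).integrable_comp_of_integrable hf
  rw [removeSlab, integral_piecewise measurableSet_Iio hf.integrableOn hshift.integrableOn,
    compl_Iio, setIntegral_Ici_comp_add_right, add_sub_cancel,
    ← setIntegral_Iio_add_Ico_add_Ici hf hab]
  ring

lemma lintegral_removeSlab (F : ℝ → ℝ≥0∞) {a b : ℝ} (hab : a ≤ b) :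
    (∫⁻ y, removeSlab a b F y) + ∫⁻ y in Ico a b, F y = ∫⁻ y, F y := by
  rw [removeSlab, lintegral_piecewise measurableSet_Iio, compl_Iio,
    setLIntegral_Ici_comp_add_right, add_sub_cancel, ← setLIntegral_Iio_add_Ico_add_Ici F hab]
  ring

lemma IsPrimitiveOf.removeSlab {f df : ℝ → ℝ} (h : IsPrimitiveOf f df) {a b : ℝ}
    (hab : f a = f b) : IsPrimitiveOf (removeSlab a b f) (removeSlab a b df) :=
  h.piecewise_Iio (h.comp_add_right (b - a)) (by simp [hab])

section MemH1

variable {f df : ℝ → ℝ}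

lemma MemH1.insertPlateau (h : MemH1 f df) {s : ℝ} (hs : 0 ≤ s) :
    MemH1 (insertPlateau s (f 0) f) (insertPlateau s 0 df) := by
  obtain ⟨hf, hdf, hp⟩ := memH1_iff_s9.1 h
  exact memH1_iff_s9.2 ⟨hf.insertPlateau s _, hdf.insertPlateau s 0, hp.insertPlateau hs⟩

lemma MemH1.removeSlab (h : MemH1 f df) {a b : ℝ} (hab : f a = f b) :
    MemH1 (removeSlab a b f) (removeSlab a b df) := by
  obtain ⟨hf, hdf, hp⟩ := memH1_iff_s9.1 h
  exact memH1_iff_s9.2 ⟨hf.removeSlab a b, hdf.removeSlab a b, hp.removeSlab hab⟩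

lemma phaseEnergy_insertPlateau (c : ℝ → ℝ) (f df : ℝ → ℝ) {s : ℝ} (hs : 0 ≤ s) (θ : ℝ) :
    phaseEnergy c (insertPlateau s θ f) (insertPlateau s 0 df) =
      phaseEnergy c f df + ENNReal.ofReal (s * c θ) := by
  rw [phaseEnergy, apply_insertPlateau₂ (fun dφ φ => ENNReal.ofReal ((1/2) * dφ ^ 2 + c φ)),
    lintegral_insertPlateau _ hs, ENNReal.ofReal_mul hs]
  simp [phaseEnergy]

lemma phaseEnergy_removeSlab (c : ℝ → ℝ) (f df : ℝ → ℝ) {a b : ℝ} (hab : a ≤ b) :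
    phaseEnergy c (removeSlab a b f) (removeSlab a b df) +
        ∫⁻ y in Ico a b, ENNReal.ofReal ((1/2) * df y ^ 2 + c (f y)) = phaseEnergy c f df := by
  rw [phaseEnergy, apply_removeSlab₂ (fun dφ φ => ENNReal.ofReal ((1/2) * dφ ^ 2 + c φ)),
    lintegral_removeSlab _ hab, phaseEnergy]

end MemH1

lemma apply_le_apply_zero_of_even {ψ : ℝ → ℝ} (heven : ∀ y, ψ (-y) = ψ y)
    (hmono : AntitoneOn ψ (Ici 0)) (y : ℝ) : ψ y ≤ ψ 0 := by
  rcases le_total 0 y with hy | hy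
  · exact hmono self_mem_Ici hy hy
  · rw [← heven y]
    exact hmono self_mem_Ici (neg_nonneg.2 hy) (neg_nonneg.2 hy)

lemma exists_setIntegral_Ico_neg_eq {f : ℝ → ℝ} (hf : Integrable f) {h : ℝ} (h0 : 0 ≤ h)
    (hlt : h < ∫ y, f y) : ∃ ℓ, 0 ≤ ℓ ∧ ∫ y in Ico (-ℓ) ℓ, f y = h := by
  have hii : ∀ a b : ℝ, IntervalIntegrable f volume a b := fun a b =>
    intervalIntegrable_iff.2 hf.integrableOn
  set G : ℝ → ℝ := fun ℓ => ∫ y in (-ℓ)..ℓ, f y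
  have hG : ∀ ℓ, G ℓ = (∫ y in (0:ℝ)..ℓ, f y) - ∫ y in (0:ℝ)..(-ℓ), f y := fun ℓ =>
    (intervalIntegral.integral_interval_sub_left (hii 0 ℓ) (hii 0 (-ℓ))).symm
  have hGcont : Continuous G := by
    have hP := intervalIntegral.continuous_primitive hii 0
    exact (hP.sub (hP.comp continuous_neg)).congr fun ℓ => (hG ℓ).symm
  have hGlim : Tendsto G atTop (𝓝 (∫ y, f y)) :=
    intervalIntegral_tendsto_integral hf tendsto_neg_atTop_atBot tendsto_id
  obtain ⟨ℓ₀, hℓ₀, hGℓ₀⟩ :=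
    ((eventually_ge_atTop 0).and (hGlim.eventually (eventually_gt_nhds hlt))).exists
  obtain ⟨ℓ, hℓ, hGℓ⟩ : h ∈ G '' Icc 0 ℓ₀ :=
    intermediate_value_Icc hℓ₀ hGcont.continuousOn ⟨by simpa [G] using h0, hGℓ₀.le⟩
  refine ⟨ℓ, hℓ.1, ?_⟩
  rw [setIntegral_congr_set Ico_ae_eq_Ioc, ← intervalIntegral.integral_of_le (by linarith [hℓ.1])]
  exact hGℓ

lemma ofReal_setIntegral_le_setLIntegral_ofReal {g F : ℝ → ℝ} {A : Set ℝ} (hA : MeasurableSet A)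
    (hg : IntegrableOn g A) (hg0 : ∀ y ∈ A, 0 ≤ g y) (hgF : ∀ y ∈ A, g y ≤ F y) :
    ENNReal.ofReal (∫ y in A, g y) ≤ ∫⁻ y in A, ENNReal.ofReal (F y) := by
  rw [ofReal_integral_eq_lintegral_ofReal hg ((ae_restrict_iff' hA).2 (.of_forall hg0))]
  exact setLIntegral_mono' hA fun y hy => ENNReal.ofReal_le_ofReal (hgF y hy)

lemma tauC_le_phaseEnergy_s9 {c ψ dψ : ℝ → ℝ} (hH : MemH1 ψ dψ) (hnn : ∀ y, 0 ≤ ψ y)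
    (hint : Integrable ψ) : tauC c (∫ y, ψ y) ≤ phaseEnergy c ψ dψ :=
  iInf₂_le (ψ, dψ) ⟨hH, hnn, hint, rfl⟩

lemma tauC_integral_add_le {c ψ dψ : ℝ → ℝ} (hH : MemH1 ψ dψ) (hnn : ∀ y, 0 ≤ ψ y)
    (hint : Integrable ψ) {s : ℝ} (hs : 0 ≤ s) :
    tauC c ((∫ y, ψ y) + s * ψ 0) ≤ phaseEnergy c ψ dψ + ENNReal.ofReal (s * c (ψ 0)) := by
  rw [← integral_insertPlateau hint hs, ← phaseEnergy_insertPlateau c ψ dψ hs]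
  exact tauC_le_phaseEnergy_s9 (hH.insertPlateau hs) (forall_insertPlateau (hnn 0) hnn)
    (hint.insertPlateau s _)

lemma tauC_integral_sub_add_le {c ψ dψ : ℝ → ℝ} (hH : MemH1 ψ dψ) (hnn : ∀ y, 0 ≤ ψ y)
    (hint : Integrable ψ) {lam : ℝ} (hlam : 0 ≤ lam)
    (hc : ∀ φ ∈ Icc 0 (ψ 0), lam * φ ≤ c φ) (heven : ∀ y, ψ (-y) = ψ y)
    (hmono : AntitoneOn ψ (Ici 0)) {h : ℝ} (h0 : 0 ≤ h) (hlt : h < ∫ y, ψ y) :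
    tauC c ((∫ y, ψ y) - h) + ENNReal.ofReal (lam * h) ≤ phaseEnergy c ψ dψ := by
  obtain ⟨ℓ, hℓ, hslab⟩ := exists_setIntegral_Ico_neg_eq hint h0 hlt
  have hℓ' : -ℓ ≤ ℓ := neg_le_self hℓ
  have hmass : (∫ y, ψ y) - h = ∫ y, removeSlab (-ℓ) ℓ ψ y := by
    rw [← integral_removeSlab hint hℓ', hslab, add_sub_cancel_right]
  rw [hmass, ← phaseEnergy_removeSlab c ψ dψ hℓ']
  gcongr
  · exact tauC_le_phaseEnergy_s9 (hH.removeSlab (heven ℓ)) (forall_removeSlab hnn)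
      (hint.removeSlab _ _)
  · rw [← hslab, ← integral_const_mul]
    refine ofReal_setIntegral_le_setLIntegral_ofReal measurableSet_Ico
      (hint.const_mul lam).integrableOn (fun y _ => mul_nonneg hlam (hnn y)) fun y _ => ?_
    have hpeak := hc (ψ y) ⟨hnn y, apply_le_apply_zero_of_even heven hmono y⟩
    nlinarith [sq_nonneg (dψ y)]

lemma tauC_add_ofReal_mul_integral_le {c ψ dψ : ℝ → ℝ} {lam : ℝ} (hlam : 0 ≤ lam)
    (hcpeak : c (ψ 0) = lam * ψ 0) (hc : ∀ φ ∈ Icc 0 (ψ 0), lam * φ ≤ c φ)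
    (hH : MemH1 ψ dψ) (hnn : ∀ y, 0 ≤ ψ y) (heven : ∀ y, ψ (-y) = ψ y)
    (hmono : AntitoneOn ψ (Ici 0)) (hint : Integrable ψ) (hpeak : 0 < ψ 0) {v : ℝ} (hv : 0 < v) :
    tauC c v + ENNReal.ofReal (lam * ∫ y, ψ y) ≤
      phaseEnergy c ψ dψ + ENNReal.ofReal (lam * v) := by
  set m := ∫ y, ψ y
  have hm : 0 ≤ m := integral_nonneg hnn
  have hsplit : ∀ x y, 0 ≤ x → 0 ≤ y →
      ENNReal.ofReal (lam * x) + ENNReal.ofReal (lam * y) = ENNReal.ofReal (lam * (x + y)) :=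
    fun x y hx hy => by
      rw [← ENNReal.ofReal_add (mul_nonneg hlam hx) (mul_nonneg hlam hy), mul_add]
  rcases le_or_gt m v with hmv | hvm
  · have hplateau :=
      tauC_integral_add_le (c := c) hH hnn hint (div_nonneg (sub_nonneg.2 hmv) hpeak.le)
    have hcost : (v - m) / ψ 0 * c (ψ 0) = lam * (v - m) := by
      rw [hcpeak]
      field_simp
    rw [div_mul_cancel₀ _ hpeak.ne', add_sub_cancel, hcost] at hplateau
    calc tauC c v + ENNReal.ofReal (lam * m)
        ≤ phaseEnergy c ψ dψ + ENNReal.ofReal (lam * (v - m)) + ENNReal.ofReal (lam * m) := by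
          gcongr
      _ = phaseEnergy c ψ dψ + ENNReal.ofReal (lam * v) := by
          rw [add_assoc, hsplit _ _ (sub_nonneg.2 hmv) hm, sub_add_cancel]
  · have hslab := tauC_integral_sub_add_le hH hnn hint hlam hc heven hmono (sub_nonneg.2 hvm.le)
      (sub_lt_self m hv)
    rw [sub_sub_cancel] at hslab
    calc tauC c v + ENNReal.ofReal (lam * m)
        = tauC c v + ENNReal.ofReal (lam * (m - v)) + ENNReal.ofReal (lam * v) := by
          rw [add_assoc, hsplit _ _ (sub_nonneg.2 hvm.le) hv.le, sub_add_cancel]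
      _ ≤ phaseEnergy c ψ dψ + ENNReal.ofReal (lam * v) := by gcongr

lemma tauC_add_ofReal_mul_integral_le_of_antitoneOn {z c ψ dψ : ℝ → ℝ}
    (hznn : ∀ φ ∈ Ici (0:ℝ), 0 ≤ z φ) (hzmono : AntitoneOn z (Ici 0)) (hcz : ∀ φ, c φ = z φ * φ)
    (hH : MemH1 ψ dψ) (hnn : ∀ y, 0 ≤ ψ y) (heven : ∀ y, ψ (-y) = ψ y)
    (hmono : AntitoneOn ψ (Ici 0)) (hint : Integrable ψ) (hpeak : 0 < ψ 0) {v : ℝ} (hv : 0 < v) :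
    tauC c v + ENNReal.ofReal (z (ψ 0) * ∫ y, ψ y) ≤
      phaseEnergy c ψ dψ + ENNReal.ofReal (z (ψ 0) * v) := by
  refine tauC_add_ofReal_mul_integral_le (hznn _ hpeak.le) (hcz _) (fun φ hφ => ?_) hH hnn heven
    hmono hint hpeak hv
  rw [hcz]
  exact mul_le_mul_of_nonneg_right (hzmono hφ.1 hpeak.le hφ.2) hφ.1

lemma phaseEnergy_ne_top {c ψ dψ : ℝ → ℝ} {K : ℝ} (hc : ∀ y, c (ψ y) ≤ K * ψ y)
    (hdψ : MemLp dψ 2 volume) (hint : Integrable ψ) : phaseEnergy c ψ dψ ≠ ⊤ := by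
  have hbound : Integrable fun y => (1/2) * dψ y ^ 2 + K * ψ y :=
    (hdψ.integrable_sq.const_mul _).add (hint.const_mul _)
  refine ne_top_of_le_ne_top hbound.lintegral_lt_top.ne (lintegral_mono fun y => ?_)
  exact ENNReal.ofReal_le_ofReal (by linarith [hc y])

lemma ENNReal.toReal_add_le_toReal_add {A B : ℝ≥0∞} {x y : ℝ} (hB : B ≠ ⊤) (hx : 0 ≤ x)
    (hy : 0 ≤ y) (h : A + ENNReal.ofReal x ≤ B + ENNReal.ofReal y) :
    A.toReal + x ≤ B.toReal + y := by
  have hB' : B + ENNReal.ofReal y ≠ ⊤ := ENNReal.add_ne_top.2 ⟨hB, ENNReal.ofReal_ne_top⟩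
  have hA : A ≠ ⊤ := ne_top_of_le_ne_top hB' (le_self_add.trans h)
  simpa [ENNReal.toReal_add, hA, hB, hx, hy] using ENNReal.toReal_mono hB' h

theorem alternative_characterization_of_minimizer_general
    (z : ℝ → ℝ) (hznn : ∀ φ ∈ Ici (0:ℝ), 0 ≤ z φ)
    (hzmono : AntitoneOn z (Ici 0))
    (c : ℝ → ℝ) (hcz : ∀ φ, c φ = z φ * φ)
    (τ : ℝ → ℝ) (hτ : ∀ v, τ v = (tauC c v).toReal)
    (w : ℝ) (hw : 0 < w)
    (ψh dψh : ℝ → ℝ)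
    (hψh : MemH1 ψh dψh) (hψhnn : ∀ y, 0 ≤ ψh y)
    (hψheven : ∀ y, ψh (-y) = ψh y) (hψhmono : AntitoneOn ψh (Ici 0))
    (hψhint : Integrable ψh) (hψhmass : (∫ y, ψh y) = w)
    (hψhmin : phaseEnergy c ψh dψh = tauC c w)
    (lam : ℝ) (hlam : lam = z (ψh 0)) :
    (∀ ψ dψ : ℝ → ℝ, MemH1 ψ dψ → (∀ y, 0 ≤ ψ y) → (∀ y, ψ (-y) = ψ y) →
      AntitoneOn ψ (Ici 0) → Integrable ψ → ψ 0 = ψh 0 →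
      phaseEnergy c ψh dψh + ENNReal.ofReal (lam * ∫ y, ψ y) ≤
        phaseEnergy c ψ dψ + ENNReal.ofReal (lam * w)) ∧
    (∀ h : ℝ, 0 < h → τ (w + h) - τ w ≤ lam * h) ∧
    (∀ h : ℝ, 0 < h → h < w → lam * h ≤ τ w - τ (w - h)) := by
  have hpeak : 0 < ψh 0 := by
    by_contra! hle
    have : (∫ y, ψh y) ≤ 0 :=
      integral_nonpos fun y => (apply_le_apply_zero_of_even hψheven hψhmono y).trans hle
    linarith
  have hlam0 : 0 ≤ lam := hlam ▸ hznn _ hpeak.le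
  have hfin : tauC c w ≠ ⊤ := hψhmin ▸ phaseEnergy_ne_top (K := z 0) (fun y => by
    rw [hcz]
    exact mul_le_mul_of_nonneg_right (hzmono self_mem_Ici (hψhnn y) (hψhnn y)) (hψhnn y))
    hψh.2.1 hψhint
  have hslope : ∀ v, 0 < v → τ v + lam * w ≤ τ w + lam * v := fun v hv => by
    have h := tauC_add_ofReal_mul_integral_le_of_antitoneOn hznn hzmono hcz hψh hψhnn hψheven
      hψhmono hψhint hpeak hv
    rw [hψhmass, hψhmin, ← hlam] at h
    rw [hτ, hτ]
    exact ENNReal.toReal_add_le_toReal_add hfin (mul_nonneg hlam0 hw.le) (mul_nonneg hlam0 hv.le) h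
  refine ⟨fun ψ dψ hH hnn heven hmono hint h0 => ?_, fun h hh => ?_, fun h hh hhw => ?_⟩
  · rw [hψhmin, hlam, ← h0]
    exact tauC_add_ofReal_mul_integral_le_of_antitoneOn hznn hzmono hcz hH hnn heven hmono hint
      (h0 ▸ hpeak) hw
  · linarith [hslope (w + h) (by linarith)]
  · linarith [hslope (w - h) (by linarith)]

/-- alternative characterization of optimal phase field functions:
with `λ = z(ψ̂(0))`, the minimizer `ψ̂` minimizes the energy penalized by `-λ·mass`
among profiles of the same height, and `λ` lies between the one-sided derivatives
of `τ` at `w`. -/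
theorem alternative_characterization_of_minimizer
    (z : ℝ → ℝ) (hznn : ∀ φ ∈ Ici (0:ℝ), 0 ≤ z φ)
    (hzmono : AntitoneOn z (Ici 0))
    (hzlsc : LowerSemicontinuousOn z (Ici 0))
    (c : ℝ → ℝ) (hcz : ∀ φ, c φ = z φ * φ)
    (τ : ℝ → ℝ) (hτ : ∀ v, τ v = (tauC c v).toReal)
    (L : ℝ) (hL : Tendsto (fun v => τ v / v) (𝓝[>] 0) (𝓝 L))
    (w : ℝ) (hw : 0 < w) (hne : τ w ≠ w * L)
    (ψh dψh : ℝ → ℝ)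
    (hψh : MemH1 ψh dψh) (hψhnn : ∀ y, 0 ≤ ψh y)
    (hψhbd : ∃ M : ℝ, ∀ y, ψh y ≤ M) (hψhcont : Continuous ψh)
    (hψheven : ∀ y, ψh (-y) = ψh y) (hψhmono : AntitoneOn ψh (Ici 0))
    (hψhint : Integrable ψh) (hψhmass : (∫ y, ψh y) = w)
    (hψhmin : phaseEnergy c ψh dψh = tauC c w)
    (lam : ℝ) (hlam : lam = z (ψh 0)) :
    (∀ ψ dψ : ℝ → ℝ, MemH1 ψ dψ → (∀ y, 0 ≤ ψ y) → (∀ y, ψ (-y) = ψ y) →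
      AntitoneOn ψ (Ici 0) → Integrable ψ → ψ 0 = ψh 0 →
      phaseEnergy c ψh dψh + ENNReal.ofReal (lam * ∫ y, ψ y) ≤
        phaseEnergy c ψ dψ + ENNReal.ofReal (lam * w)) ∧
    (∀ h : ℝ, 0 < h → τ (w + h) - τ w ≤ lam * h) ∧
    (∀ h : ℝ, 0 < h → h < w → lam * h ≤ τ w - τ (w - h)) :=
  alternative_characterization_of_minimizer_general z hznn hzmono c hcz τ hτ w hw ψh dψh hψh hψhnn
    hψheven hψhmono hψhint hψhmass hψhmin lam hlam
end

section
/- Let z : [0,∞) → [0,∞) be nonincreasing on (0,∞), set c(φ) = z(φ)·φ, and suppose the induced transport cost τ^c is finite on [0,∞). Then ∫_0^1 √(c(φ)) dφ < ∞, and consequently liminf_{φ→0+} z(φ)·φ³ = 0. -/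
/-!
Take a profile `ψ` of mass one and finite energy, and a point where `δ = ψ t₀ > 0`. Being
integrable, `ψ` later drops below every positive level, so for each `k` it crosses the band
`(δ/2ᵏ⁺¹, δ/2ᵏ)` on an interval, and these intervals are disjoint because the bands are. There
`c(ψ) ≥ m = z(δ/2ᵏ) δ/2ᵏ⁺¹` since `z` is nonincreasing, and the Modica–Mortola inequality
`√(2m) |ψ'| ≤ ψ'²/2 + c(ψ)` makes the energy on that interval at least `√(2m) δ/2ᵏ⁺¹`. So the
energy bounds the dyadic sum `∑ₖ √(z(δ/2ᵏ) δ/2ᵏ⁺¹) δ/2ᵏ⁺¹`, which in turn is at least a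
quarter of `∫₀^δ √c`, again by monotonicity of `z`. Finally, `z φ φ³ ≥ a > 0` near `0` would give
`√c(φ) ≥ √a / φ`, which is not integrable at `0`.
-/

open MeasureTheory Filter Set
open scoped ENNReal Topology

section Crossing

variable {α β : Type*} [ConditionallyCompleteLinearOrder α] [TopologicalSpace α]
  [OrderTopology α] [DenselyOrdered α] [LinearOrder β] [TopologicalSpace β]
  [OrderClosedTopology β] {f : α → β} {p q : α}

theorem Continuous.exists_first_eq_of_lt_of_le (hf : Continuous f) {a : β} (hpq : p ≤ q)
    (hp : a < f p) (hq : f q ≤ a) : ∃ e ∈ Ioc p q, f e = a ∧ ∀ t ∈ Ico p e, a < f t := by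
  obtain ⟨e, ⟨⟨hpe, heq⟩, hfe⟩, hmin⟩ :=
    (isCompact_Icc.inter_right (isClosed_le hf continuous_const)).exists_isLeast
      ⟨q, ⟨hpq, le_rfl⟩, hq⟩
  have habove : ∀ t ∈ Ico p e, a < f t := fun t ht =>
    not_le.1 fun h => ht.2.not_ge (hmin ⟨⟨ht.1, ht.2.le.trans heq⟩, h⟩)
  have hpe' : p < e := hpe.lt_of_ne (by rintro rfl; exact hfe.not_gt hp)
  have : (𝓝[<] e).NeBot := nhdsLT_neBot_of_exists_lt ⟨p, hpe'⟩
  refine ⟨e, ⟨hpe', heq⟩, le_antisymm hfe ?_, habove⟩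
  exact ge_of_tendsto (hf.continuousAt.tendsto.mono_left nhdsWithin_le_nhds)
    (eventually_of_mem (Ioo_mem_nhdsLT hpe') fun t ht => (habove t ⟨ht.1.le, ht.2⟩).le)

theorem Continuous.exists_last_eq_of_le_of_lt (hf : Continuous f) {b : β} (hpq : p ≤ q)
    (hp : b ≤ f p) (hq : f q < b) : ∃ s ∈ Ico p q, f s = b ∧ ∀ t ∈ Ioc s q, f t < b := by
  obtain ⟨s, ⟨hqs, hsp⟩, hs, hbelow⟩ :=
    Continuous.exists_first_eq_of_lt_of_le (α := αᵒᵈ) (β := βᵒᵈ)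
      (f := OrderDual.toDual ∘ f ∘ OrderDual.ofDual) (p := OrderDual.toDual q)
      (q := OrderDual.toDual p) (a := OrderDual.toDual b) hf hpq hq hp
  exact ⟨OrderDual.ofDual s, ⟨hsp, hqs⟩, hs, fun t ht =>
    hbelow (OrderDual.toDual t) ⟨ht.2, ht.1⟩⟩

theorem Continuous.exists_downcrossing (hf : Continuous f) {a b : β} (hab : a < b)
    (hpq : p ≤ q) (hp : b ≤ f p) (hq : f q ≤ a) :
    ∃ s e, s < e ∧ f s = b ∧ f e = a ∧ ∀ t ∈ Ioo s e, f t ∈ Ioo a b := by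
  obtain ⟨e, ⟨hpe, -⟩, hfe, habove⟩ := hf.exists_first_eq_of_lt_of_le hpq (hab.trans_le hp) hq
  obtain ⟨s, ⟨hps, hse⟩, hfs, hbelow⟩ := hf.exists_last_eq_of_le_of_lt hpe.le hp (hfe ▸ hab)
  exact ⟨s, e, hse, hfs, hfe, fun t ht =>
    ⟨habove t ⟨hps.trans ht.1.le, ht.2⟩, hbelow t ⟨ht.1, ht.2.le⟩⟩⟩

end Crossing

theorem MeasureTheory.Integrable.frequently_atTop_norm_lt {E : Type*} [NormedAddCommGroup E]
    {f : ℝ → E} (hf : Integrable f) {r : ℝ} (hr : 0 < r) : ∃ᶠ t in atTop, ‖f t‖ < r := by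
  intro h
  obtain ⟨t₀, ht₀⟩ := eventually_atTop.1 h
  have hconst : IntegrableOn (fun _ => r) (Ici t₀) :=
    hf.norm.integrableOn.mono' aestronglyMeasurable_const
      ((ae_restrict_iff' measurableSet_Ici).2 (Eventually.of_forall fun t ht => by
        simpa [abs_of_pos hr] using ht₀ t ht))
  simp [integrableOn_const_iff, hr.ne'] at hconst

theorem sqrt_two_mul_mul_abs_le {m : ℝ} (hm : 0 ≤ m) (x : ℝ) :
    √(2 * m) * |x| ≤ 1 / 2 * x ^ 2 + m := by
  nlinarith [sq_nonneg (|x| - √(2 * m)), sq_abs x, Real.sq_sqrt (by positivity : 0 ≤ 2 * m)]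

namespace MemH1

variable {ψ dψ : ℝ → ℝ}

theorem intervalIntegrable (h : MemH1 ψ dψ) (a b : ℝ) : IntervalIntegrable dψ volume a b :=
  ((h.2.1.locallyIntegrable one_le_two).integrableOn_isCompact isCompact_uIcc).intervalIntegrable

theorem continuous_s11 (h : MemH1 ψ dψ) : Continuous ψ :=
  (continuous_const.add (intervalIntegral.continuous_primitive h.intervalIntegrable 0)).congr
    fun t => (h.2.2 t).symm

theorem sub_eq_integral (h : MemH1 ψ dψ) (a b : ℝ) : ψ b - ψ a = ∫ y in a..b, dψ y := by
  rw [h.2.2 a, h.2.2 b, ← intervalIntegral.integral_interval_sub_left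
    (h.intervalIntegrable 0 b) (h.intervalIntegrable 0 a)]
  ring

theorem ofReal_sqrt_mul_abs_sub_le (h : MemH1 ψ dψ) {c : ℝ → ℝ} {m s e : ℝ} (hm : 0 ≤ m)
    (hse : s ≤ e) (hc : ∀ t ∈ Ioo s e, m ≤ c (ψ t)) :
    ENNReal.ofReal (√(2 * m) * |ψ e - ψ s|) ≤
      ∫⁻ y in Ioo s e, ENNReal.ofReal (1 / 2 * dψ y ^ 2 + c (ψ y)) := by
  have hΔ : ψ e - ψ s = ∫ y in Ioo s e, dψ y := by
    rw [h.sub_eq_integral, intervalIntegral.integral_of_le hse, integral_Ioc_eq_integral_Ioo]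
  calc ENNReal.ofReal (√(2 * m) * |ψ e - ψ s|)
      = ENNReal.ofReal √(2 * m) * ‖∫ y in Ioo s e, dψ y‖ₑ := by
        rw [ENNReal.ofReal_mul (Real.sqrt_nonneg _), hΔ, Real.enorm_eq_ofReal_abs]
    _ ≤ ENNReal.ofReal √(2 * m) * ∫⁻ y in Ioo s e, ‖dψ y‖ₑ := by
        gcongr
        exact enorm_integral_le_lintegral_enorm _
    _ = ∫⁻ y in Ioo s e, ENNReal.ofReal (√(2 * m) * |dψ y|) := by
        rw [← lintegral_const_mul' _ _ ENNReal.ofReal_ne_top]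
        simp only [ENNReal.ofReal_mul (Real.sqrt_nonneg _), Real.enorm_eq_ofReal_abs]
    _ ≤ ∫⁻ y in Ioo s e, ENNReal.ofReal (1 / 2 * dψ y ^ 2 + c (ψ y)) :=
        setLIntegral_mono' measurableSet_Ioo fun y hy => ENNReal.ofReal_le_ofReal <|
          (sqrt_two_mul_mul_abs_le hm _).trans (by linarith [hc y hy])

theorem tsum_ofReal_le_phaseEnergy (h : MemH1 ψ dψ) (hψ : Integrable ψ) {c : ℝ → ℝ}
    {A m : ℕ → ℝ} (hA : StrictAnti A) (hA0 : ∀ k, 0 < A k) {t₀ : ℝ} (ht₀ : A 0 ≤ ψ t₀)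
    (hm : ∀ k, 0 ≤ m k) (hmc : ∀ k, ∀ φ ∈ Ioo (A (k + 1)) (A k), m k ≤ c φ) :
    ∑' k, ENNReal.ofReal (√(2 * m k) * (A k - A (k + 1))) ≤ phaseEnergy c ψ dψ := by
  have hcross : ∀ k, ∃ s e, s < e ∧ ψ s = A k ∧ ψ e = A (k + 1) ∧
      ∀ t ∈ Ioo s e, ψ t ∈ Ioo (A (k + 1)) (A k) := by
    intro k
    obtain ⟨q, hq, hψq⟩ := (hψ.frequently_atTop_norm_lt (hA0 (k + 1))).forall_exists_of_atTop t₀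
    exact h.continuous_s11.exists_downcrossing (hA k.lt_succ_self) hq
      ((hA.antitone k.zero_le).trans ht₀) (lt_of_abs_lt hψq).le
  choose s e hse hs he hband using hcross
  have hdisj : Pairwise (Function.onFun Disjoint fun k => Ioo (s k) (e k)) := fun i j hij =>
    ((hA.antitone.pairwise_disjoint_on_Ioo_succ hij).preimage ψ).mono
      (fun t ht => hband i t ht) (fun t ht => hband j t ht)
  calc ∑' k, ENNReal.ofReal (√(2 * m k) * (A k - A (k + 1)))
      ≤ ∑' k, ∫⁻ y in Ioo (s k) (e k), ENNReal.ofReal (1 / 2 * dψ y ^ 2 + c (ψ y)) :=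
        ENNReal.tsum_le_tsum fun k => by
          simpa [hs, he, abs_sub_comm, abs_of_pos (sub_pos.2 (hA k.lt_succ_self))] using
            h.ofReal_sqrt_mul_abs_sub_le (hm k) (hse k).le fun t ht => hmc k _ (hband k t ht)
    _ = ∫⁻ y in ⋃ k, Ioo (s k) (e k), ENNReal.ofReal (1 / 2 * dψ y ^ 2 + c (ψ y)) :=
        (lintegral_iUnion (fun _ => measurableSet_Ioo) hdisj _).symm
    _ ≤ phaseEnergy c ψ dψ := setLIntegral_le_lintegral _ _

end MemH1

theorem Ioc_zero_subset_iUnion_Ioc_div_two_pow (δ : ℝ) :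
    Ioc 0 δ ⊆ ⋃ k : ℕ, Ioc (δ / 2 ^ (k + 1)) (δ / 2 ^ k) := by
  rintro x ⟨hx, hxδ⟩
  obtain ⟨k, hk, hk'⟩ := exists_nat_pow_near ((one_le_div hx).2 hxδ) one_lt_two
  refine mem_iUnion.2 ⟨k, ?_, ?_⟩
  · rwa [div_lt_iff₀ (by positivity), mul_comm, ← div_lt_iff₀ hx]
  · rwa [le_div_iff₀ (by positivity), mul_comm, ← le_div_iff₀ hx]

section AntitoneWeight

variable {z : ℝ → ℝ}

theorem lintegral_Ioc_sqrt_le (hz : ∀ φ ∈ Ioi (0 : ℝ), 0 ≤ z φ) (hzmono : AntitoneOn z (Ioi 0))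
    {a b : ℝ} (ha : 0 < a) :
    ∫⁻ φ in Ioc a b, ENNReal.ofReal √(z φ * φ) ≤ ENNReal.ofReal (√(z a * b) * (b - a)) := by
  have hbound : ∀ φ ∈ Ioc a b, √(z φ * φ) ≤ √(z a * b) := fun φ hφ => by
    have hφ0 : 0 < φ := ha.trans hφ.1
    gcongr
    exacts [hz a ha, hzmono ha hφ0 hφ.1.le, hφ.2]
  calc ∫⁻ φ in Ioc a b, ENNReal.ofReal √(z φ * φ)
      ≤ ∫⁻ _ in Ioc a b, ENNReal.ofReal √(z a * b) :=
        setLIntegral_mono' measurableSet_Ioc fun φ hφ => ENNReal.ofReal_le_ofReal (hbound φ hφ)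
    _ = ENNReal.ofReal (√(z a * b) * (b - a)) := by
        rw [setLIntegral_const, Real.volume_Ioc, ENNReal.ofReal_mul (Real.sqrt_nonneg _)]

noncomputable def dyadicSum (z : ℝ → ℝ) (δ : ℝ) : ℝ≥0∞ :=
  ∑' k : ℕ, ENNReal.ofReal (√(z (δ / 2 ^ k) * (δ / 2 ^ (k + 1))) * (δ / 2 ^ (k + 1)))

theorem lintegral_Ioc_zero_sqrt_le_dyadicSum (hz : ∀ φ ∈ Ioi (0 : ℝ), 0 ≤ z φ)
    (hzmono : AntitoneOn z (Ioi 0)) {δ : ℝ} (hδ : 0 < δ) :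
    ∫⁻ φ in Ioc 0 δ, ENNReal.ofReal √(z φ * φ) ≤ 4 * dyadicSum z δ := by
  set u : ℕ → ℝ := fun k => δ / 2 ^ k
  have hband : ∀ k, √(z (u (k + 1)) * u k) * (u k - u (k + 1)) =
      4 * (√(z (u (k + 1)) * u (k + 2)) * u (k + 2)) := fun k => by
    have h4 : u k = 2 ^ 2 * u (k + 2) := by simp only [u]; field_simp; ring
    have h2 : u (k + 1) = 2 * u (k + 2) := by simp only [u]; field_simp; ring
    rw [h4, h2, mul_left_comm, Real.sqrt_mul (by positivity), Real.sqrt_sq zero_le_two]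
    ring
  calc ∫⁻ φ in Ioc 0 δ, ENNReal.ofReal √(z φ * φ)
      ≤ ∫⁻ φ in ⋃ k : ℕ, Ioc (u (k + 1)) (u k), ENNReal.ofReal √(z φ * φ) :=
        lintegral_mono_set (Ioc_zero_subset_iUnion_Ioc_div_two_pow δ)
    _ ≤ ∑' k, ∫⁻ φ in Ioc (u (k + 1)) (u k), ENNReal.ofReal √(z φ * φ) := lintegral_iUnion_le _ _
    _ ≤ ∑' k, 4 * ENNReal.ofReal (√(z (u (k + 1)) * u (k + 2)) * u (k + 2)) :=
        ENNReal.tsum_le_tsum fun k => by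
          rw [← ENNReal.ofReal_ofNat 4, ← ENNReal.ofReal_mul zero_le_four, ← hband]
          exact lintegral_Ioc_sqrt_le hz hzmono (div_pos hδ (by positivity))
    _ = 4 * ∑' k, ENNReal.ofReal (√(z (u (k + 1)) * u (k + 2)) * u (k + 2)) :=
        ENNReal.tsum_mul_left
    _ ≤ 4 * dyadicSum z δ := by
        gcongr
        exact ENNReal.tsum_comp_le_tsum_of_injective (add_left_injective 1)
          fun k => ENNReal.ofReal (√(z (u k) * u (k + 1)) * u (k + 1))

theorem lintegral_Ioc_zero_one_sqrt_lt_top (hz : ∀ φ ∈ Ioi (0 : ℝ), 0 ≤ z φ)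
    (hzmono : AntitoneOn z (Ioi 0)) {δ : ℝ} (hδ : 0 < δ) (hfin : dyadicSum z δ < ⊤) :
    ∫⁻ φ in Ioc 0 1, ENNReal.ofReal √(z φ * φ) < ⊤ :=
  calc ∫⁻ φ in Ioc 0 1, ENNReal.ofReal √(z φ * φ)
      ≤ ∫⁻ φ in Ioc 0 δ ∪ Ioc δ 1, ENNReal.ofReal √(z φ * φ) :=
        lintegral_mono_set Ioc_subset_Ioc_union_Ioc
    _ ≤ (∫⁻ φ in Ioc 0 δ, ENNReal.ofReal √(z φ * φ)) +
          ∫⁻ φ in Ioc δ 1, ENNReal.ofReal √(z φ * φ) :=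
        lintegral_union_le _ _ _
    _ ≤ 4 * dyadicSum z δ + ENNReal.ofReal (√(z δ * 1) * (1 - δ)) :=
        add_le_add (lintegral_Ioc_zero_sqrt_le_dyadicSum hz hzmono hδ)
          (lintegral_Ioc_sqrt_le hz hzmono hδ)
    _ < ⊤ := ENNReal.add_lt_top.2 ⟨ENNReal.mul_lt_top (by simp) hfin, ENNReal.ofReal_lt_top⟩

end AntitoneWeight

theorem MemH1.dyadicSum_le_phaseEnergy {ψ dψ : ℝ → ℝ} (h : MemH1 ψ dψ) (hψ : Integrable ψ)
    {z : ℝ → ℝ} (hz : ∀ φ ∈ Ioi (0 : ℝ), 0 ≤ z φ) (hzmono : AntitoneOn z (Ioi 0)) {t₀ : ℝ}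
    (ht₀ : 0 < ψ t₀) : dyadicSum z (ψ t₀) ≤ phaseEnergy (fun φ => z φ * φ) ψ dψ := by
  set δ := ψ t₀
  set A : ℕ → ℝ := fun k => δ / 2 ^ k
  have hA0 : ∀ k, 0 < A k := fun k => div_pos ht₀ (by positivity)
  have hA : StrictAnti A := fun i j hij =>
    div_lt_div_of_pos_left ht₀ (by positivity) (pow_lt_pow_right₀ one_lt_two hij)
  have hgap : ∀ k, A k - A (k + 1) = A (k + 1) := fun k => by simp only [A]; field_simp; ring
  have hm : ∀ k, 0 ≤ z (A k) * A (k + 1) := fun k => mul_nonneg (hz _ (hA0 k)) (hA0 _).le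
  have hmc : ∀ k, ∀ φ ∈ Ioo (A (k + 1)) (A k), z (A k) * A (k + 1) ≤ z φ * φ := fun k φ hφ => by
    have hφ0 : 0 < φ := (hA0 _).trans hφ.1
    exact mul_le_mul (hzmono hφ0 (hA0 k) hφ.2.le) hφ.1.le (hA0 _).le (hz φ hφ0)
  refine le_trans (ENNReal.tsum_le_tsum fun k => ?_)
    (h.tsum_ofReal_le_phaseEnergy hψ hA hA0 (t₀ := t₀) (by simp [A, δ]) hm hmc)
  rw [hgap]
  refine ENNReal.ofReal_le_ofReal (mul_le_mul_of_nonneg_right (Real.sqrt_le_sqrt ?_) (hA0 _).le)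
  linarith [hm k]

theorem lintegral_Ioc_zero_eq_top_of_le_mul {g : ℝ → ℝ} {a b : ℝ} (ha : 0 < a) (hb : 0 < b)
    (h : ∀ᶠ φ in 𝓝[>] 0, a ≤ g φ * φ) : ∫⁻ φ in Ioc 0 b, ENNReal.ofReal (g φ) = ⊤ := by
  obtain ⟨ε, hε, hεg⟩ := (nhdsGT_basis (0 : ℝ)).eventually_iff.1 h
  set ε' := min (ε / 2) b
  have hε' : 0 < ε' := lt_min (half_pos hε) hb
  by_contra hne
  have hle : ∫⁻ φ in Ioc 0 ε', ENNReal.ofReal (a * φ⁻¹) ≤ ∫⁻ φ in Ioc 0 b, ENNReal.ofReal (g φ) :=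
    (setLIntegral_mono' measurableSet_Ioc fun φ hφ => ENNReal.ofReal_le_ofReal <| by
      have := hεg ⟨hφ.1, hφ.2.trans_lt ((min_le_left _ _).trans_lt (half_lt_self hε))⟩
      rwa [← div_eq_mul_inv, div_le_iff₀ hφ.1]).trans
      (lintegral_mono_set (Ioc_subset_Ioc_right (min_le_right _ _)))
  have hint : IntegrableOn (fun φ => a * φ⁻¹) (Ioc 0 ε') :=
    (lintegral_ofReal_ne_top_iff_integrable (by fun_prop)
      ((ae_restrict_iff' measurableSet_Ioc).2 (Eventually.of_forall fun φ hφ =>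
        mul_nonneg ha.le (inv_nonneg.2 hφ.1.le)))).1 (ne_top_of_le_ne_top hne hle)
  have hinv : IntervalIntegrable (fun φ => φ⁻¹) volume 0 ε' :=
    (intervalIntegrable_iff_integrableOn_Ioc_of_le hε'.le).2 <|
      IntegrableOn.congr_fun (hint.const_mul a⁻¹) (fun φ _ => by field_simp) measurableSet_Ioc
  simp [intervalIntegrable_inv_iff, hε'.ne, Set.uIcc_of_le hε'.le] at hinv
  linarith

theorem liminf_mul_pow_three_eq_zero {z : ℝ → ℝ} (hz : ∀ φ ∈ Ioi (0 : ℝ), 0 ≤ z φ)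
    (hfin : ∫⁻ φ in Ioc 0 1, ENNReal.ofReal √(z φ * φ) < ⊤) :
    liminf (fun φ => z φ * φ ^ 3) (𝓝[>] 0) = 0 := by
  rw [liminf_eq]
  refine IsGreatest.csSup_eq ⟨eventually_nhdsWithin_of_forall fun φ hφ =>
    mul_nonneg (hz φ hφ) (pow_nonneg (le_of_lt hφ) 3), fun a ha => ?_⟩
  by_contra! ha0
  refine hfin.ne (lintegral_Ioc_zero_eq_top_of_le_mul (Real.sqrt_pos.2 ha0) one_pos ?_)
  filter_upwards [ha, self_mem_nhdsWithin] with φ hφ hφ0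
  calc √a ≤ √(z φ * φ ^ 3) := Real.sqrt_le_sqrt hφ
    _ = √(z φ * φ * φ ^ 2) := by ring_nf
    _ = √(z φ * φ) * φ := by rw [Real.sqrt_mul' _ (sq_nonneg φ), Real.sqrt_sq (le_of_lt hφ0)]

theorem exists_phaseEnergy_lt_top_of_tauC_lt_top {c : ℝ → ℝ} {w : ℝ} (h : tauC c w < ⊤) :
    ∃ ψ dψ, MemH1 ψ dψ ∧ Integrable ψ ∧ ∫ y, ψ y = w ∧ phaseEnergy c ψ dψ < ⊤ := by
  simp only [tauC, iInf_lt_iff] at h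
  obtain ⟨⟨ψ, dψ⟩, ⟨hH1, -, hint, hw⟩, hE⟩ := h
  exact ⟨ψ, dψ, hH1, hint, hw, hE⟩

/-- a priori estimates on a phase field cost inducing a finite transport
cost: `∫₀¹ √(c(φ)) dφ < ∞` and consequently `liminf_{φ→0⁺} z(φ)·φ³ = 0`. -/
theorem a_priori_estimates_on_phase_field_cost
    (z : ℝ → ℝ) (hznn : ∀ φ ∈ Ici (0:ℝ), 0 ≤ z φ)
    (hzmono : AntitoneOn z (Ioi 0))
    (c : ℝ → ℝ) (hcz : ∀ φ, c φ = z φ * φ)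
    (hfin : ∀ w ∈ Ici (0:ℝ), tauC c w < ⊤) :
    (∫⁻ φ in Ioc (0:ℝ) 1, ENNReal.ofReal (Real.sqrt (c φ))) < ⊤ ∧
    Filter.liminf (fun φ => z φ * φ ^ 3) (𝓝[>] (0:ℝ)) = 0 := by
  obtain rfl : c = fun φ => z φ * φ := funext hcz
  have hz : ∀ φ ∈ Ioi (0 : ℝ), 0 ≤ z φ := fun φ hφ => hznn φ (Ioi_subset_Ici_self hφ)
  obtain ⟨ψ, dψ, hH1, hψ, hmass, hE⟩ :=
    exists_phaseEnergy_lt_top_of_tauC_lt_top (hfin 1 (mem_Ici.2 zero_le_one))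
  obtain ⟨t₀, ht₀⟩ : ∃ t₀, 0 < ψ t₀ := by
    by_contra! hψ0
    linarith [integral_nonpos (μ := volume) hψ0]
  have hsqrt := lintegral_Ioc_zero_one_sqrt_lt_top hz hzmono ht₀
    ((hH1.dyadicSum_le_phaseEnergy hψ hz hzmono ht₀).trans_lt hE)
  exact ⟨hsqrt, liminf_mul_pow_three_eq_zero hz hsqrt⟩
end

section
/- Let c : [0,∞) → [0,∞) be arbitrary (Borel measurable so that the energy is defined), and let ψ ∈ H¹(ℝ) be nonnegative with ∫_ℝ ψ dy = w > 0 and essential supremum ψ̂ = ess sup ψ. Then F^c[ψ] ≥ (ψ̂/2)³ / (w/2) = ψ̂³/(4w). -/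
open MeasureTheory Filter Set
open scoped ENNReal Topology

/-! At a point `y` with `ψ y = b > 0`, let `(p, q)` be the maximal interval around `y` on which
`ψ > b / 2`. By Chebyshev its length is at most `2w / b`, while `ψ` climbs by at least `b / 2` on
`[p, y]` and falls by at least `b / 2` on `[y, q]`; Cauchy–Schwarz on both pieces gives
`∫ ψ'² ≥ b² / (q - p) ≥ b³ / (2w)`. So every value of `ψ`, hence its essential supremum `ψ̂`,
satisfies `ψ̂³ ≤ 2w ∫ ψ'²`, and `F^c[ψ] ≥ ½ ∫ ψ'²` because `c ≥ 0`. -/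

theorem sq_intervalIntegral_le_mul_intervalIntegral_sq {f : ℝ → ℝ} {u v : ℝ}
    (hf : IntervalIntegrable f volume u v)
    (hf2 : IntervalIntegrable (fun s => f s ^ 2) volume u v) :
    (∫ s in u..v, f s) ^ 2 ≤ (v - u) * ∫ s in u..v, f s ^ 2 := by
  wlog huv : u ≤ v generalizing u v
  · have := this hf.symm hf2.symm (le_of_not_ge huv)
    rw [intervalIntegral.integral_symm u, intervalIntegral.integral_symm u] at this
    linarith
  set L := v - u
  set I := ∫ s in u..v, f s
  set J := ∫ s in u..v, f s ^ 2
  -- `0 ≤ ∫ (L f - I)²` expands to `0 ≤ L (L J - I²)`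
  have hexpand : ∫ s in u..v, (L * f s - I) ^ 2 = L * (L * J - I ^ 2) := by
    have hlin : IntervalIntegrable (fun s => L ^ 2 * f s ^ 2 - 2 * L * I * f s) volume u v :=
      (hf2.const_mul _).sub (hf.const_mul _)
    simp_rw [show ∀ s, (L * f s - I) ^ 2 = L ^ 2 * f s ^ 2 - 2 * L * I * f s + I ^ 2 from
      fun s => by ring]
    rw [intervalIntegral.integral_add hlin intervalIntegrable_const,
      intervalIntegral.integral_sub (hf2.const_mul _) (hf.const_mul _),
      intervalIntegral.integral_const_mul, intervalIntegral.integral_const_mul,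
      intervalIntegral.integral_const, smul_eq_mul]
    ring
  have hnonneg : 0 ≤ ∫ s in u..v, (L * f s - I) ^ 2 :=
    intervalIntegral.integral_nonneg huv fun _ _ => sq_nonneg _
  rcases huv.eq_or_lt with rfl | hlt
  · simp [L, J, I]
  · have hL : 0 < L := sub_pos.2 hlt
    nlinarith

-- AM–GM: `L₁ J₂ + L₂ J₁ ≥ 2 √(L₁ J₁ · L₂ J₂) ≥ 2 a²`.
theorem four_mul_sq_le_add_mul_add {a L₁ L₂ J₁ J₂ : ℝ} (hL₁ : 0 ≤ L₁) (hL₂ : 0 ≤ L₂)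
    (hJ₁ : 0 ≤ J₁) (hJ₂ : 0 ≤ J₂) (h₁ : a ^ 2 ≤ L₁ * J₁) (h₂ : a ^ 2 ≤ L₂ * J₂) :
    4 * a ^ 2 ≤ (L₁ + L₂) * (J₁ + J₂) := by
  have hprod : a ^ 2 * a ^ 2 ≤ (L₁ * J₂) * (L₂ * J₁) := by
    calc a ^ 2 * a ^ 2 ≤ (L₁ * J₁) * (L₂ * J₂) := mul_le_mul h₁ h₂ (sq_nonneg a) (by positivity)
      _ = (L₁ * J₂) * (L₂ * J₁) := by ring
  nlinarith [sq_nonneg (L₁ * J₂ - L₂ * J₁), mul_nonneg hL₁ hJ₂, mul_nonneg hL₂ hJ₁]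

theorem four_mul_sq_le_mul_intervalIntegral_sq {f : ℝ → ℝ} {p y q a : ℝ} (hpy : p ≤ y)
    (hyq : y ≤ q) (hf : IntervalIntegrable f volume p q)
    (hf2 : IntervalIntegrable (fun s => f s ^ 2) volume p q) (ha : 0 ≤ a)
    (hup : a ≤ ∫ s in p..y, f s) (hdown : a ≤ -∫ s in y..q, f s) :
    4 * a ^ 2 ≤ (q - p) * ∫ s in p..q, f s ^ 2 := by
  have hpy' : uIcc p y ⊆ uIcc p q := uIcc_subset_uIcc_left (mem_uIcc_of_le hpy hyq)
  have hyq' : uIcc y q ⊆ uIcc p q := uIcc_subset_uIcc_right (mem_uIcc_of_le hpy hyq)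
  have h₁ : a ^ 2 ≤ (y - p) * ∫ s in p..y, f s ^ 2 :=
    (pow_le_pow_left₀ ha hup 2).trans
      (sq_intervalIntegral_le_mul_intervalIntegral_sq (hf.mono_set hpy') (hf2.mono_set hpy'))
  have h₂ : a ^ 2 ≤ (q - y) * ∫ s in y..q, f s ^ 2 :=
    (pow_le_pow_left₀ ha hdown 2).trans <| (neg_sq _).trans_le
      (sq_intervalIntegral_le_mul_intervalIntegral_sq (hf.mono_set hyq') (hf2.mono_set hyq'))
  rw [← intervalIntegral.integral_add_adjacent_intervals (hf2.mono_set hpy') (hf2.mono_set hyq'),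
    show q - p = (y - p) + (q - y) by ring]
  exact four_mul_sq_le_add_mul_add (sub_nonneg.2 hpy) (sub_nonneg.2 hyq)
    (intervalIntegral.integral_nonneg hpy fun _ _ => sq_nonneg _)
    (intervalIntegral.integral_nonneg hyq fun _ _ => sq_nonneg _) h₁ h₂

theorem IsClosed.exists_Ioo_subset_compl {α : Type*} [ConditionallyCompleteLinearOrder α]
    [TopologicalSpace α] [OrderTopology α] {s : Set α} (hs : IsClosed s) {y : α}
    (hleft : (s ∩ Iic y).Nonempty) (hright : (s ∩ Ici y).Nonempty) :
    ∃ p ∈ s, ∃ q ∈ s, p ≤ y ∧ y ≤ q ∧ Ioo p q ⊆ sᶜ := by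
  have hbdd : BddAbove (s ∩ Iic y) := ⟨y, fun _ hx => hx.2⟩
  have hbdd' : BddBelow (s ∩ Ici y) := ⟨y, fun _ hx => hx.2⟩
  obtain ⟨hp, hpy⟩ := (hs.inter isClosed_Iic).csSup_mem hleft hbdd
  obtain ⟨hq, hyq⟩ := (hs.inter isClosed_Ici).csInf_mem hright hbdd'
  refine ⟨_, hp, _, hq, hpy, hyq, fun x ⟨hpx, hxq⟩ hx => ?_⟩
  rcases le_total x y with hxy | hyx
  · exact (le_csSup hbdd ⟨hx, hxy⟩).not_gt hpx
  · exact (csInf_le hbdd' ⟨hx, hyx⟩).not_gt hxq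

theorem nonempty_inter_Iic_of_volume_compl_ne_top {s : Set ℝ} (hs : volume sᶜ ≠ ∞) (y : ℝ) :
    (s ∩ Iic y).Nonempty := by
  by_contra h
  refine hs (top_le_iff.1 ?_)
  rw [← Real.volume_Iic (a := y)]
  exact measure_mono fun x hx hxs => h ⟨x, hxs, hx⟩

theorem nonempty_inter_Ici_of_volume_compl_ne_top {s : Set ℝ} (hs : volume sᶜ ≠ ∞) (y : ℝ) :
    (s ∩ Ici y).Nonempty := by
  by_contra h
  refine hs (top_le_iff.1 ?_)
  rw [← Real.volume_Ici (a := y)]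
  exact measure_mono fun x hx hxs => h ⟨x, hxs, hx⟩

theorem meas_ge_le_ofReal_integral_div {α : Type*} [MeasurableSpace α] {μ : Measure α}
    {f : α → ℝ} (hf : Integrable f μ) (hf0 : 0 ≤ᵐ[μ] f) {t : ℝ} (ht : 0 < t) :
    μ {x | t ≤ f x} ≤ ENNReal.ofReal ((∫ x, f x ∂μ) / t) := by
  calc μ {x | t ≤ f x} ≤ μ {x | ENNReal.ofReal t ≤ ENNReal.ofReal (f x)} :=
        measure_mono fun x hx => ENNReal.ofReal_le_ofReal hx
    _ ≤ (∫⁻ x, ENNReal.ofReal (f x) ∂μ) / ENNReal.ofReal t :=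
        meas_ge_le_lintegral_div hf.aemeasurable.ennreal_ofReal (by simpa using ht)
          ENNReal.ofReal_ne_top
    _ = ENNReal.ofReal ((∫ x, f x ∂μ) / t) := by
        rw [← ofReal_integral_eq_lintegral_ofReal hf hf0, ENNReal.ofReal_div_of_pos ht]

section Primitive

variable {ψ dψ : ℝ → ℝ}

theorem continuous_of_eq_add_intervalIntegral (hdψ : LocallyIntegrable dψ)
    (hψ : ∀ t, ψ t = ψ 0 + ∫ s in (0 : ℝ)..t, dψ s) : Continuous ψ :=
  (continuous_const.add (intervalIntegral.continuous_primitive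
    (fun _ _ => (hdψ.integrableOn_isCompact isCompact_uIcc).intervalIntegrable) 0)).congr
    fun t => (hψ t).symm

theorem intervalIntegral_eq_sub_of_eq_add_intervalIntegral (hdψ : LocallyIntegrable dψ)
    (hψ : ∀ t, ψ t = ψ 0 + ∫ s in (0 : ℝ)..t, dψ s) (u v : ℝ) :
    ∫ s in u..v, dψ s = ψ v - ψ u := by
  rw [hψ v, hψ u, add_sub_add_left_eq_sub, intervalIntegral.integral_interval_sub_left]
  all_goals exact (hdψ.integrableOn_isCompact isCompact_uIcc).intervalIntegrable

end Primitive

theorem Continuous.exists_sublevel_bracket {ψ : ℝ → ℝ} (hψc : Continuous ψ) (hψnn : ∀ x, 0 ≤ ψ x)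
    (hψint : Integrable ψ) {t : ℝ} (ht : 0 < t) (y : ℝ) :
    ∃ p q, p ≤ y ∧ y ≤ q ∧ ψ p ≤ t ∧ ψ q ≤ t ∧ q - p ≤ (∫ x, ψ x) / t := by
  set s := {x | ψ x ≤ t}
  have hcompl : volume sᶜ ≤ ENNReal.ofReal ((∫ x, ψ x) / t) :=
    (measure_mono fun x (hx : ¬ψ x ≤ t) => (not_le.1 hx).le).trans
      (meas_ge_le_ofReal_integral_div hψint (ae_of_all _ hψnn) ht)
  have hcompl_ne_top : volume sᶜ ≠ ∞ := ne_top_of_le_ne_top ENNReal.ofReal_ne_top hcompl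
  obtain ⟨p, hp, q, hq, hpy, hyq, hgap⟩ :=
    (isClosed_le hψc continuous_const).exists_Ioo_subset_compl
      (nonempty_inter_Iic_of_volume_compl_ne_top hcompl_ne_top y)
      (nonempty_inter_Ici_of_volume_compl_ne_top hcompl_ne_top y)
  refine ⟨p, q, hpy, hyq, hp, hq, ?_⟩
  rw [← ENNReal.ofReal_le_ofReal_iff (div_nonneg (integral_nonneg hψnn) ht.le), ← Real.volume_Ioo]
  exact (measure_mono hgap).trans hcompl

theorem pow_three_le_two_mul_integral_mul_integral_sq {ψ dψ : ℝ → ℝ} (hdψ : MemLp dψ 2 volume)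
    (hψ : ∀ t, ψ t = ψ 0 + ∫ s in (0 : ℝ)..t, dψ s) (hψnn : ∀ x, 0 ≤ ψ x)
    (hψint : Integrable ψ) (y : ℝ) :
    ψ y ^ 3 ≤ 2 * (∫ x, ψ x) * ∫ x, dψ x ^ 2 := by
  set w := ∫ x, ψ x
  set E := ∫ x, dψ x ^ 2
  have hw : 0 ≤ w := integral_nonneg hψnn
  have hE : 0 ≤ E := integral_nonneg fun _ => sq_nonneg _
  rcases le_or_gt (ψ y) 0 with hy | hy
  · exact (Odd.pow_nonpos (by decide) hy).trans (by positivity)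
  set b := ψ y
  have hloc : LocallyIntegrable dψ := hdψ.locallyIntegrable one_le_two
  have hsq : Integrable fun x => dψ x ^ 2 := hdψ.integrable_sq
  obtain ⟨p, q, hpy, hyq, hp, hq, hlen⟩ :=
    (continuous_of_eq_add_intervalIntegral hloc hψ).exists_sublevel_bracket hψnn hψint
      (half_pos hy) y
  have hclimb : 4 * (b / 2) ^ 2 ≤ (q - p) * ∫ s in p..q, dψ s ^ 2 := by
    have hFTC := intervalIntegral_eq_sub_of_eq_add_intervalIntegral hloc hψ
    refine four_mul_sq_le_mul_intervalIntegral_sq hpy hyq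
      (hloc.integrableOn_isCompact isCompact_uIcc).intervalIntegrable hsq.intervalIntegrable
      (by positivity) ?_ ?_
    · rw [hFTC]; linarith
    · rw [hFTC]; linarith
  have hpart : ∫ s in p..q, dψ s ^ 2 ≤ E := by
    rw [intervalIntegral.integral_of_le (hpy.trans hyq)]
    exact setIntegral_le_integral hsq (ae_of_all _ fun _ => sq_nonneg _)
  have hb : b ^ 2 ≤ w / (b / 2) * E :=
    calc b ^ 2 = 4 * (b / 2) ^ 2 := by ring
      _ ≤ (q - p) * ∫ s in p..q, dψ s ^ 2 := hclimb
      _ ≤ w / (b / 2) * E := mul_le_mul hlen hpart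
        (intervalIntegral.integral_nonneg (hpy.trans hyq) fun _ _ => sq_nonneg _) (by positivity)
  rw [div_mul_eq_mul_div, le_div_iff₀ (by positivity)] at hb
  linarith

theorem ofReal_half_integral_sq_le_phaseEnergy {c ψ dψ : ℝ → ℝ}
    (hcnn : ∀ φ ∈ Ici (0 : ℝ), 0 ≤ c φ) (hψnn : ∀ y, 0 ≤ ψ y) (hdψ : MemLp dψ 2 volume) :
    ENNReal.ofReal ((1 / 2) * ∫ y, dψ y ^ 2) ≤ phaseEnergy c ψ dψ := by
  rw [← integral_const_mul, ofReal_integral_eq_lintegral_ofReal (hdψ.integrable_sq.const_mul _)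
    (ae_of_all _ fun _ => by positivity)]
  exact lintegral_mono fun y => ENNReal.ofReal_le_ofReal (le_add_of_nonneg_right (hcnn _ (hψnn y)))

theorem a_priori_energy_estimate_general
    (c : ℝ → ℝ) (hcnn : ∀ φ ∈ Ici (0:ℝ), 0 ≤ c φ)
    (ψ dψ : ℝ → ℝ) (hψ : MemH1 ψ dψ) (hψnn : ∀ y, 0 ≤ ψ y)
    (hψint : Integrable ψ)
    (w : ℝ) (hw : 0 < w) (hmass : (∫ y, ψ y) = w)
    (ψhat : ℝ) (hψhat : ψhat = essSup ψ volume) :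
    ENNReal.ofReal (ψhat ^ 3 / (4 * w)) ≤ phaseEnergy c ψ dψ := by
  obtain ⟨-, hdψ, hprim⟩ := hψ
  set E := ∫ y, dψ y ^ 2
  have hcube : ∀ y, ψ y ^ 3 ≤ 2 * w * E :=
    hmass ▸ pow_three_le_two_mul_integral_mul_integral_sq hdψ hprim hψnn hψint
  have hodd : Odd 3 := by decide
  obtain ⟨C, hC⟩ : ∃ C : ℝ, C ^ 3 = 2 * w * E :=
    ⟨_, Real.rpow_inv_natCast_pow (by positivity) three_ne_zero⟩
  have hψhat_le : ψhat ≤ C :=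
    hψhat ▸ essSup_le_of_ae_le C (ae_of_all _ fun y => hodd.pow_le_pow.1 (hC ▸ hcube y))
      (isCoboundedUnder_le_of_le _ hψnn)
  refine (ENNReal.ofReal_le_ofReal ?_).trans (ofReal_half_integral_sq_le_phaseEnergy hcnn hψnn hdψ)
  rw [div_le_iff₀ (by positivity)]
  calc ψhat ^ 3 ≤ C ^ 3 := hodd.pow_le_pow.2 hψhat_le
    _ = 1 / 2 * E * (4 * w) := by rw [hC]; ring

/-- a priori lower estimate on the phase field energy in terms of the
essential supremum and the mass of the profile. -/
theorem a_priori_energy_estimate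
    (c : ℝ → ℝ) (hc : Measurable c) (hcnn : ∀ φ ∈ Ici (0:ℝ), 0 ≤ c φ)
    (ψ dψ : ℝ → ℝ) (hψ : MemH1 ψ dψ) (hψnn : ∀ y, 0 ≤ ψ y)
    (hψint : Integrable ψ)
    (w : ℝ) (hw : 0 < w) (hmass : (∫ y, ψ y) = w)
    (ψhat : ℝ) (hψhat : ψhat = essSup ψ volume) :
    ENNReal.ofReal (ψhat ^ 3 / (4 * w)) ≤ phaseEnergy c ψ dψ :=
  a_priori_energy_estimate_general c hcnn ψ dψ hψ hψnn hψint w hw hmass ψhat hψhat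
end

section
/- Let c : [0,∞) → [0,∞) be lower semicontinuous and bounded on every compact interval [a,b] ⊂ (0,∞). Let T ∈ (0,∞], ψ̂ > 0, and let ψ : [0,T) → [0,∞) be locally absolutely continuous with ψ(0) = ψ̂ and ψ(t) → 0 as t → T. Then ∫_0^T (1/2)|ψ'(t)|² + c(ψ(t)) dt ≥ ∫_0^{ψ̂} √(2 c(φ)) dφ. -/
open MeasureTheory Filter Set
open scoped ENNReal Topology

/-!
Pointwise, `½ ψ'² + c(ψ) ≥ √(2 c(ψ)) |ψ'|`. Cut `(0, ψ̂]` into bands `(a, b)`. As `ψ` is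
continuous, starts at `ψ̂` and eventually drops below every positive level, each band is crossed
during some time interval `(s, t)` with `ψ s = b`, `ψ t = a` and `ψ` inside the band in between.
These intervals are disjoint for distinct bands, and on each of them the energy is at least
`(inf_{[a, b]} √(2c)) · |∫ₛᵗ ψ'| = (inf_{[a, b]} √(2c)) · (b - a)`. So the energy dominates every
lower Darboux sum of `√(2c)`; lower semicontinuity of `c` makes the lower step functions converge
to `√(2c)` from below in the `liminf` sense, and Fatou's lemma passes to the integral.
-/

section Crossing

variable {ψ : ℝ → ℝ} {u v a : ℝ}

theorem ContinuousOn.exists_first_eq_of_le_of_ge (huv : u ≤ v) (hψ : ContinuousOn ψ (Icc u v))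
    (hu : a ≤ ψ u) (hv : ψ v ≤ a) :
    ∃ t ∈ Icc u v, ψ t = a ∧ ∀ r ∈ Ico u t, a < ψ r := by
  set A := Icc u v ∩ ψ ⁻¹' Iic a
  have hA : IsClosed A := hψ.preimage_isClosed_of_isClosed isClosed_Icc isClosed_Iic
  have hAbdd : BddBelow A := ⟨u, fun x hx => hx.1.1⟩
  have htA : sInf A ∈ A := hA.csInf_mem ⟨v, ⟨huv, le_rfl⟩, hv⟩ hAbdd
  have hbefore : ∀ r ∈ Ico u (sInf A), a < ψ r := fun r hr => not_le.1 fun hr' =>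
    hr.2.not_ge (csInf_le hAbdd ⟨⟨hr.1, hr.2.le.trans htA.1.2⟩, hr'⟩)
  obtain ⟨x, hx, hψx⟩ := intermediate_value_Icc' htA.1.1 (hψ.mono (Icc_subset_Icc_right htA.1.2))
    ⟨htA.2, hu⟩
  have hxt : x = sInf A :=
    le_antisymm hx.2 (csInf_le hAbdd ⟨⟨hx.1, hx.2.trans htA.1.2⟩, hψx.le⟩)
  exact ⟨sInf A, htA.1, hxt ▸ hψx, hbefore⟩

theorem ContinuousOn.exists_last_eq_of_ge_of_le (huv : u ≤ v) (hψ : ContinuousOn ψ (Icc u v))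
    (hu : a ≤ ψ u) (hv : ψ v ≤ a) :
    ∃ s ∈ Icc u v, ψ s = a ∧ ∀ r ∈ Ioc s v, ψ r < a := by
  have hφ : ContinuousOn (fun r => -ψ (-r)) (Icc (-v) (-u)) :=
    (hψ.comp continuousOn_neg fun r hr => ⟨le_neg.1 hr.2, neg_le.1 hr.1⟩).neg
  obtain ⟨t, ht, hφt, hbefore⟩ :=
    hφ.exists_first_eq_of_le_of_ge (a := -a) (neg_le_neg huv) (by simpa using neg_le_neg hv)
      (by simpa using neg_le_neg hu)
  refine ⟨-t, ⟨le_neg.1 ht.2, neg_le.1 ht.1⟩, by linarith [hφt], fun r hr => ?_⟩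
  have := hbefore (-r) ⟨neg_le_neg hr.2, neg_lt.1 hr.1⟩
  simp only [neg_neg] at this
  linarith

theorem ContinuousOn.exists_crossing {b : ℝ} (huv : u ≤ v) (hψ : ContinuousOn ψ (Icc u v))
    (hab : a ≤ b) (hu : b ≤ ψ u) (hv : ψ v ≤ a) :
    ∃ s t, u ≤ s ∧ s ≤ t ∧ t ≤ v ∧ ψ s = b ∧ ψ t = a ∧ MapsTo ψ (Ioo s t) (Ioo a b) := by
  obtain ⟨t, ht, hψt, hbefore⟩ := hψ.exists_first_eq_of_le_of_ge huv (hab.trans hu) hv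
  obtain ⟨s, hs, hψs, hafter⟩ :=
    (hψ.mono (Icc_subset_Icc_right ht.2)).exists_last_eq_of_ge_of_le ht.1 hu (hψt ▸ hab)
  exact ⟨s, t, hs.1, hs.2, ht.2, hψs, hψt,
    fun r hr => ⟨hbefore r ⟨hs.1.trans hr.1.le, hr.2⟩, hafter r ⟨hr.1, hr.2.le⟩⟩⟩

end Crossing

theorem pairwise_disjoint_Ioo_add_nat_mul (a h : ℝ) :
    Pairwise (Function.onFun Disjoint fun j : ℕ => Ioo (a + j * h) (a + (j + 1) * h)) :=
  fun i j hij => by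
    simpa [zsmul_eq_mul] using pairwise_disjoint_Ioo_add_zsmul a h (Nat.cast_injective.ne hij)

theorem exists_nat_mem_Ioc_add_mul {a h y : ℝ} (hh : 0 < h) (hay : a < y) :
    ∃ j : ℕ, y ∈ Ioc (a + j * h) (a + (j + 1) * h) := by
  set x := (y - a) / h
  have hx : 0 < x := div_pos (sub_pos.2 hay) hh
  have hk : 1 ≤ ⌈x⌉₊ := Nat.one_le_iff_ne_zero.2 (Nat.ceil_pos.2 hx).ne'
  refine ⟨⌈x⌉₊ - 1, ?_, ?_⟩ <;> push_cast [hk]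
  · have := Nat.ceil_lt_add_one hx.le
    have : (⌈x⌉₊ - 1 : ℝ) * h < x * h := mul_lt_mul_of_pos_right (by linarith) hh
    rw [div_mul_cancel₀ _ hh.ne'] at this
    linarith
  · have : x * h ≤ (⌈x⌉₊ : ℝ) * h := mul_le_mul_of_nonneg_right (Nat.le_ceil x) hh.le
    rw [div_mul_cancel₀ _ hh.ne'] at this
    linarith

section LowerSum

noncomputable def bandInf (f : ℝ → ℝ≥0∞) (a h : ℝ) (j : ℕ) : ℝ≥0∞ :=
  ⨅ x ∈ Icc (a + j * h) (a + (j + 1) * h), f x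

noncomputable def lowerSum (f : ℝ → ℝ≥0∞) (a h : ℝ) (s : Finset ℕ) : ℝ≥0∞ :=
  ∑ j ∈ s, bandInf f a h j * ENNReal.ofReal h

noncomputable def lowerStep (f : ℝ → ℝ≥0∞) (a h : ℝ) (s : Finset ℕ) (y : ℝ) : ℝ≥0∞ :=
  ∑ j ∈ s, (Ioc (a + j * h) (a + (j + 1) * h)).indicator (fun _ => bandInf f a h j) y

variable {f : ℝ → ℝ≥0∞} {a b h : ℝ} {s : Finset ℕ}

theorem measurable_lowerStep : Measurable (lowerStep f a h s) :=
  Finset.measurable_sum _ fun _ _ => measurable_const.indicator measurableSet_Ioc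

theorem lintegral_lowerStep : ∫⁻ y, lowerStep f a h s y = lowerSum f a h s := by
  unfold lowerStep lowerSum
  rw [lintegral_finsetSum _ fun _ _ => measurable_const.indicator measurableSet_Ioc]
  refine Finset.sum_congr rfl fun j _ => ?_
  rw [lintegral_indicator_const measurableSet_Ioc, Real.volume_Ioc]
  ring_nf

theorem bandInf_le_lowerStep {j : ℕ} {y : ℝ} (hj : j ∈ s)
    (hy : y ∈ Ioc (a + j * h) (a + (j + 1) * h)) :
    bandInf f a h j ≤ lowerStep f a h s y := by
  rw [← indicator_of_mem hy fun _ => bandInf f a h j]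
  exact Finset.single_le_sum (f := fun i : ℕ => (Ioc (a + i * h) (a + (i + 1) * h)).indicator
    (fun _ => bandInf f a h i) y) (fun _ _ => bot_le) hj

theorem le_liminf_lowerStep (hf : LowerSemicontinuousOn f (Ioc a b)) {y : ℝ} (hy : y ∈ Ioc a b) :
    f y ≤ liminf (fun n : ℕ => lowerStep f a ((b - a) / n) (Finset.Ico 1 n) y) atTop := by
  refine le_of_forall_lt_imp_le_of_dense fun m hm => ?_
  obtain ⟨η, hη, hball⟩ := Metric.mem_nhdsWithin_iff.1 (hf y hy m hm)
  have hmesh : Tendsto (fun n : ℕ => (b - a) / n) atTop (𝓝 0) :=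
    tendsto_const_div_atTop_nhds_zero_nat _
  refine le_liminf_of_le (by isBoundedDefault) ?_
  filter_upwards [hmesh.eventually_lt_const (lt_min hη (sub_pos.2 hy.1)), eventually_gt_atTop 0]
    with n hn hn0
  set h := (b - a) / n
  have hh : 0 < h := div_pos (sub_pos.2 (hy.1.trans_le hy.2)) (Nat.cast_pos.2 hn0)
  have hb : a + n * h = b := by simp only [h]; field_simp; ring
  obtain ⟨j, hj⟩ := exists_nat_mem_Ioc_add_mul hh hy.1
  have hj1 : 1 ≤ j := by
    refine Nat.one_le_iff_ne_zero.2 fun hj0 => ?_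
    have := hj.2
    simp only [hj0, CharP.cast_eq_zero, zero_add, one_mul] at this
    linarith [min_le_right η (y - a)]
  have hjn : j < n := by
    have : (j : ℝ) * h < n * h := by linarith [hj.1, hj.2, hy.2]
    exact_mod_cast lt_of_mul_lt_mul_right this hh.le
  refine le_trans ?_ (bandInf_le_lowerStep (Finset.mem_Ico.2 ⟨hj1, hjn⟩) hj)
  refine le_iInf₂ fun x hx => (hball ⟨?_, ?_⟩).le
  · rw [Metric.mem_ball, Real.dist_eq, abs_lt]
    constructor <;> nlinarith [hj.1, hj.2, hx.1, hx.2, min_le_left η (y - a)]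
  · have hjn' : (j : ℝ) + 1 ≤ n := by exact_mod_cast hjn
    have hj1' : (1 : ℝ) ≤ j := by exact_mod_cast hj1
    constructor <;> nlinarith [hx.1, hx.2]

-- Leaving out the band `j = 0` keeps every band away from `a`; for `a = 0` this is what lets a
-- profile that only tends to `0` cross each band in finite time.
theorem setLIntegral_Ioc_le_of_lowerSum_le (hf : LowerSemicontinuousOn f (Ioc a b)) {E : ℝ≥0∞}
    (hE : ∀ n : ℕ, 0 < n → lowerSum f a ((b - a) / n) (Finset.Ico 1 n) ≤ E) :
    ∫⁻ y in Ioc a b, f y ≤ E :=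
  calc ∫⁻ y in Ioc a b, f y
      ≤ ∫⁻ y in Ioc a b, liminf (fun n : ℕ => lowerStep f a ((b - a) / n) (Finset.Ico 1 n) y)
          atTop :=
        setLIntegral_mono' measurableSet_Ioc fun _ hy => le_liminf_lowerStep hf hy
    _ ≤ liminf (fun n : ℕ => ∫⁻ y in Ioc a b, lowerStep f a ((b - a) / n) (Finset.Ico 1 n) y)
          atTop :=
        lintegral_liminf_le fun _ => measurable_lowerStep
    _ ≤ E := by
        refine liminf_le_of_frequently_le' ((eventually_gt_atTop 0).mono fun n hn => ?_).frequently
        exact (setLIntegral_le_lintegral _ _).trans (lintegral_lowerStep.trans_le (hE n hn))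

end LowerSum

theorem ofReal_sqrt_two_mul_mul_abs_le (x y : ℝ) :
    ENNReal.ofReal (√(2 * x) * |y|) ≤ ENNReal.ofReal (1 / 2 * y ^ 2 + x) := by
  rcases le_or_gt 0 x with hx | hx
  · refine ENNReal.ofReal_le_ofReal ?_
    nlinarith [sq_nonneg (|y| - √(2 * x)), Real.sq_sqrt (by linarith : 0 ≤ 2 * x), sq_abs y]
  · simp [Real.sqrt_eq_zero'.2 (by linarith : 2 * x ≤ 0)]

theorem mul_abs_intervalIntegral_le_lintegral_energy {g k : ℝ → ℝ} {s t : ℝ} (hst : s ≤ t)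
    {m : ℝ≥0∞} (hm : ∀ r ∈ Ioo s t, m ≤ ENNReal.ofReal √(2 * k r)) :
    m * ENNReal.ofReal |∫ r in s..t, g r| ≤
      ∫⁻ r in Ioo s t, ENNReal.ofReal (1 / 2 * g r ^ 2 + k r) := by
  have habs : ENNReal.ofReal |∫ r in s..t, g r| ≤ ∫⁻ r in Ioo s t, ENNReal.ofReal |g r| := by
    simpa only [intervalIntegral.integral_of_le hst, integral_Ioc_eq_integral_Ioo,
      Real.enorm_eq_ofReal_abs] using
      enorm_integral_le_lintegral_enorm (μ := volume.restrict (Ioo s t)) g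
  calc m * ENNReal.ofReal |∫ r in s..t, g r|
      ≤ m * ∫⁻ r in Ioo s t, ENNReal.ofReal |g r| := by gcongr
    _ ≤ ∫⁻ r in Ioo s t, m * ENNReal.ofReal |g r| := lintegral_const_mul_le _ _
    _ ≤ ∫⁻ r in Ioo s t, ENNReal.ofReal (√(2 * k r) * |g r|) :=
        setLIntegral_mono' measurableSet_Ioo fun r hr => by
          rw [ENNReal.ofReal_mul (Real.sqrt_nonneg _)]
          exact mul_le_mul_left (hm r hr) _
    _ ≤ ∫⁻ r in Ioo s t, ENNReal.ofReal (1 / 2 * g r ^ 2 + k r) :=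
        lintegral_mono fun r => ofReal_sqrt_two_mul_mul_abs_le _ _

theorem sum_le_setLIntegral_of_pairwiseDisjoint {α β ι : Type*} [MeasurableSpace α]
    {μ : Measure α} {F : α → ℝ≥0∞} {S : Set α} {ψ : α → β} {B : ι → Set β}
    (hB : Pairwise (Function.onFun Disjoint B)) {s : Finset ι} {m : ι → ℝ≥0∞}
    (h : ∀ i ∈ s, ∃ I, MeasurableSet I ∧ I ⊆ S ∧ MapsTo ψ I (B i) ∧ m i ≤ ∫⁻ x in I, F x ∂μ) :
    ∑ i ∈ s, m i ≤ ∫⁻ x in S, F x ∂μ := by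
  choose! I hImeas hIS hImaps hm using h
  have hdisj : (s : Set ι).PairwiseDisjoint I := fun i hi j hj hij =>
    ((hB hij).preimage ψ).mono (hImaps i hi) (hImaps j hj)
  calc ∑ i ∈ s, m i ≤ ∑ i ∈ s, ∫⁻ x in I i, F x ∂μ := Finset.sum_le_sum hm
    _ = ∫⁻ x in ⋃ i ∈ s, I i, F x ∂μ := (lintegral_biUnion_finset hdisj hImeas F).symm
    _ ≤ ∫⁻ x in S, F x ∂μ := lintegral_mono_set (iUnion₂_subset hIS)

section Profile

def IsIndefiniteIntegral (ψ g : ℝ → ℝ) (T : ℝ≥0∞) : Prop :=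
  ∀ t : ℝ, 0 ≤ t → ENNReal.ofReal t < T →
    IntegrableOn g (Icc 0 t) ∧ ψ t = ψ 0 + ∫ s in (0:ℝ)..t, g s

variable {T : ℝ≥0∞} {ψ g : ℝ → ℝ}

theorem IsIndefiniteIntegral.continuousOn_Icc (hAC : IsIndefiniteIntegral ψ g T)
    {v : ℝ} (hv : 0 ≤ v) (hvT : ENNReal.ofReal v < T) : ContinuousOn ψ (Icc 0 v) := by
  have hprim := intervalIntegral.continuousOn_primitive_interval (μ := volume)
    (uIcc_of_le hv ▸ (hAC v hv hvT).1)
  rw [uIcc_of_le hv] at hprim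
  refine ((continuousOn_const (c := ψ 0)).add hprim).congr fun t ht => ?_
  exact (hAC t ht.1 ((ENNReal.ofReal_le_ofReal ht.2).trans_lt hvT)).2

theorem IsIndefiniteIntegral.sub_eq_intervalIntegral (hAC : IsIndefiniteIntegral ψ g T)
    {s t : ℝ} (hs : 0 ≤ s) (hst : s ≤ t) (htT : ENNReal.ofReal t < T) :
    ψ t - ψ s = ∫ r in s..t, g r := by
  obtain ⟨hint, hψt⟩ := hAC t (hs.trans hst) htT
  have hψs := (hAC s hs ((ENNReal.ofReal_le_ofReal hst).trans_lt htT)).2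
  have hint' : ∀ x ∈ Icc 0 t, IntervalIntegrable g volume 0 x := fun x hx =>
    (hint.mono_set (uIcc_of_le hx.1 ▸ Icc_subset_Icc_right hx.2)).intervalIntegrable
  rw [hψt, hψs, add_sub_add_left_eq_sub,
    intervalIntegral.integral_interval_sub_left (hint' t ⟨hs.trans hst, le_rfl⟩)
      (hint' s ⟨hs, hst⟩)]

theorem exists_lt_of_tendsto (hT : 0 < T)
    (hlim : Tendsto ψ (if T = ⊤ then atTop else 𝓝[<] T.toReal) (𝓝 0)) {y : ℝ} (hy : 0 < y) :
    ∃ v, 0 ≤ v ∧ ENNReal.ofReal v < T ∧ ψ v < y := by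
  split_ifs at hlim with hTtop
  · obtain ⟨v, hv, hψv⟩ := ((eventually_ge_atTop 0).and (hlim.eventually_lt_const hy)).exists
    exact ⟨v, hv, hTtop ▸ ENNReal.ofReal_lt_top, hψv⟩
  · have hT' : 0 < T.toReal := ENNReal.toReal_pos hT.ne' hTtop
    obtain ⟨v, hv, hψv⟩ :=
      (Eventually.and (Ioo_mem_nhdsLT hT') (hlim.eventually_lt_const hy)).exists
    exact ⟨v, hv.1.le, (ENNReal.ofReal_lt_iff_lt_toReal hv.1.le hTtop).2 hv.2, hψv⟩

theorem IsIndefiniteIntegral.exists_crossing (hAC : IsIndefiniteIntegral ψ g T) (hT : 0 < T)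
    (hlim : Tendsto ψ (if T = ⊤ then atTop else 𝓝[<] T.toReal) (𝓝 0))
    {a b : ℝ} (ha : 0 < a) (hab : a ≤ b) (hb : b ≤ ψ 0) :
    ∃ s t, 0 ≤ s ∧ s ≤ t ∧ ENNReal.ofReal t < T ∧ ψ t - ψ s = a - b ∧
      MapsTo ψ (Ioo s t) (Ioo a b) := by
  obtain ⟨v, hv, hvT, hψv⟩ := exists_lt_of_tendsto hT hlim ha
  obtain ⟨s, t, hs, hst, htv, hψs, hψt, hmaps⟩ :=
    (hAC.continuousOn_Icc hv hvT).exists_crossing hv hab hb hψv.le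
  exact ⟨s, t, hs, hst, (ENNReal.ofReal_le_ofReal htv).trans_lt hvT, by rw [hψs, hψt], hmaps⟩

theorem lowerSum_le_lintegral_energy (c : ℝ → ℝ) (hT : 0 < T)
    (hAC : IsIndefiniteIntegral ψ g T)
    (hlim : Tendsto ψ (if T = ⊤ then atTop else 𝓝[<] T.toReal) (𝓝 0))
    {h : ℝ} (hh : 0 < h) {n : ℕ} (hn : n * h ≤ ψ 0) :
    lowerSum (fun x => ENNReal.ofReal √(2 * c x)) 0 h (Finset.Ico 1 n) ≤
      ∫⁻ t in {t : ℝ | 0 ≤ t ∧ ENNReal.ofReal t < T},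
        ENNReal.ofReal ((1/2) * g t ^ 2 + c (ψ t)) := by
  refine sum_le_setLIntegral_of_pairwiseDisjoint (ψ := ψ) (pairwise_disjoint_Ioo_add_nat_mul 0 h)
    fun j hj => ?_
  obtain ⟨hj1, hjn⟩ := Finset.mem_Ico.1 hj
  have hj1' : (1 : ℝ) ≤ j := by exact_mod_cast hj1
  have hjn' : (j : ℝ) + 1 ≤ n := by exact_mod_cast hjn
  obtain ⟨s, t, hs, hst, htT, hψst, hmaps⟩ := hAC.exists_crossing hT hlim
    (a := 0 + j * h) (b := 0 + (j + 1) * h) (by nlinarith) (by nlinarith) (by nlinarith)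
  refine ⟨Ioo s t, measurableSet_Ioo,
    fun r hr => ⟨hs.trans hr.1.le, (ENNReal.ofReal_le_ofReal hr.2.le).trans_lt htT⟩, hmaps, ?_⟩
  have hcost := mul_abs_intervalIntegral_le_lintegral_energy (g := g) (k := fun r => c (ψ r)) hst
    (m := bandInf (fun x => ENNReal.ofReal √(2 * c x)) 0 h j)
    fun r hr => iInf₂_le _ (Ioo_subset_Icc_self (hmaps hr))
  rwa [← hAC.sub_eq_intervalIntegral hs hst htT, hψst,
    show |0 + j * h - (0 + (j + 1) * h)| = h by rw [abs_sub_comm]; ring_nf; exact abs_of_pos hh]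
    at hcost

end Profile

theorem modica_mortola_lower_bound_general
    (c : ℝ → ℝ)
    (hclsc : LowerSemicontinuousOn c (Ici 0))
    (T : ℝ≥0∞) (hT : 0 < T) (ψhat : ℝ) (hψhat : 0 < ψhat)
    (ψ g : ℝ → ℝ)
    (hAC : ∀ t : ℝ, 0 ≤ t → ENNReal.ofReal t < T →
      IntegrableOn g (Icc 0 t) ∧ ψ t = ψ 0 + ∫ s in (0:ℝ)..t, g s)
    (hψ0 : ψ 0 = ψhat)
    (hlim : Tendsto ψ (if T = ⊤ then atTop else 𝓝[<] T.toReal) (𝓝 0)) :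
    (∫⁻ φ in Ioc 0 ψhat, ENNReal.ofReal (Real.sqrt (2 * c φ))) ≤
      ∫⁻ t in {t : ℝ | 0 ≤ t ∧ ENNReal.ofReal t < T},
        ENNReal.ofReal ((1/2) * g t ^ 2 + c (ψ t)) := by
  have hf : LowerSemicontinuousOn (fun x => ENNReal.ofReal √(2 * c x)) (Ioc 0 ψhat) :=
    Continuous.comp_lowerSemicontinuousOn (g := fun x => ENNReal.ofReal √(2 * x))
      (ENNReal.continuous_ofReal.comp (by fun_prop))
      (hclsc.mono fun x hx => le_of_lt hx.1)
      fun x y hxy => ENNReal.ofReal_le_ofReal (Real.sqrt_le_sqrt (by linarith))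
  refine setLIntegral_Ioc_le_of_lowerSum_le hf fun n hn => ?_
  have hn' : (0 : ℝ) < n := Nat.cast_pos.2 hn
  exact lowerSum_le_lintegral_energy c hT hAC hlim (div_pos (by linarith) hn')
    (by rw [hψ0, mul_div_cancel₀ _ hn'.ne', sub_zero])

/-- Modica-Mortola lower bound: any locally absolutely continuous profile on
`[0,T)` decreasing from `ψ̂` to `0` has energy at least `∫₀^ψ̂ √(2c(φ)) dφ`.
Here `T ∈ (0,∞]`, the profile `ψ` has a.e. derivative `g`, and local absolute
continuity is expressed by the integral representation via `g`. -/
theorem modica_mortola_lower_bound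
    (c : ℝ → ℝ) (hcnn : ∀ x ∈ Ici (0:ℝ), 0 ≤ c x)
    (hclsc : LowerSemicontinuousOn c (Ici 0))
    (hcbd : ∀ a b : ℝ, 0 < a → a ≤ b → ∃ M, ∀ x ∈ Icc a b, c x ≤ M)
    (T : ℝ≥0∞) (hT : 0 < T) (ψhat : ℝ) (hψhat : 0 < ψhat)
    (ψ g : ℝ → ℝ)
    (hψnn : ∀ t : ℝ, 0 ≤ t → ENNReal.ofReal t < T → 0 ≤ ψ t)
    (hAC : ∀ t : ℝ, 0 ≤ t → ENNReal.ofReal t < T →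
      IntegrableOn g (Icc 0 t) ∧ ψ t = ψ 0 + ∫ s in (0:ℝ)..t, g s)
    (hψ0 : ψ 0 = ψhat)
    (hlim : Tendsto ψ (if T = ⊤ then atTop else 𝓝[<] T.toReal) (𝓝 0)) :
    (∫⁻ φ in Ioc 0 ψhat, ENNReal.ofReal (Real.sqrt (2 * c φ))) ≤
      ∫⁻ t in {t : ℝ | 0 ≤ t ∧ ENNReal.ofReal t < T},
        ENNReal.ofReal ((1/2) * g t ^ 2 + c (ψ t)) :=
  modica_mortola_lower_bound_general c hclsc T hT ψhat hψhat ψ g hAC hψ0 hlim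
end

section
/- Let 0 ≤ φ_l < φ_r and w > 0. Then the infimum of ∫_0^T |φ'(t)|² dt over all T > 0 and all absolutely continuous φ : [0,T] → [φ_l, φ_r] with φ(0) = φ_l, φ(T) = φ_r, and ∫_0^T φ(t) dt = w, equals (4/9)·(φ_r^{3/2} − φ_l^{3/2})²/w, and this infimum is attained (at T = 3w/(φ_l + √(φ_l φ_r) + φ_r) by a quadratic polynomial profile). -/
open MeasureTheory Filter Set
open scoped ENNReal Topology NNReal

/-!
Lower bound: since `φ` is absolutely continuous, the chain rule gives
`(2/3) (φr^{3/2} - φl^{3/2}) = ∫ √φ φ'`, and Cauchy–Schwarz gives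
`(∫ √φ φ')² ≤ (∫ φ'²) (∫ φ) = w ∫ φ'²`.
Equality in Cauchy–Schwarz forces `φ'` proportional to `√φ`, i.e. `√φ` affine, so the optimal
profile is `(√φl + k t)²`; its mass `T (φl + √(φl φr) + φr) / 3` fixes `T`.
-/

/-- Absolutely continuous profiles on `[0,T]` are encoded by an integrable `dφ` with
`φ t = φ 0 + ∫₀ᵗ dφ`; `dφ` is then the a.e. derivative of `φ`. -/
def Admissible (φl φr w T : ℝ) (φ dφ : ℝ → ℝ) : Prop :=
  (∀ t ∈ Icc (0:ℝ) T, φ t ∈ Icc φl φr) ∧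
  φ 0 = φl ∧ φ T = φr ∧
  IntegrableOn dφ (Icc 0 T) ∧
  (∀ t ∈ Icc (0:ℝ) T, φ t = φ 0 + ∫ s in (0:ℝ)..t, dφ s) ∧
  (∫ t in (0:ℝ)..T, φ t) = w

theorem LipschitzOnWith.comp_absolutelyContinuousOnInterval {X Y : Type*}
    [PseudoMetricSpace X] [PseudoMetricSpace Y] {g : X → Y} {K : ℝ≥0} {s : Set X}
    {f : ℝ → X} {a b : ℝ} (hg : LipschitzOnWith K g s)
    (hf : AbsolutelyContinuousOnInterval f a b) (hfs : MapsTo f (uIcc a b) s) :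
    AbsolutelyContinuousOnInterval (g ∘ f) a b := by
  rw [absolutelyContinuousOnInterval_iff] at hf ⊢
  intro ε hε
  obtain ⟨δ, hδ, hfδ⟩ := hf (ε / (K + 1)) (by positivity)
  refine ⟨δ, hδ, fun E hE hlen => ?_⟩
  calc ∑ i ∈ Finset.range E.1, dist ((g ∘ f) (E.2 i).1) ((g ∘ f) (E.2 i).2)
      ≤ ∑ i ∈ Finset.range E.1, K * dist (f (E.2 i).1) (f (E.2 i).2) :=
        Finset.sum_le_sum fun i hi =>
          hg.dist_le_mul _ (hfs (hE.1 i hi).1) _ (hfs (hE.1 i hi).2)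
    _ = K * ∑ i ∈ Finset.range E.1, dist (f (E.2 i).1) (f (E.2 i).2) := by
        rw [Finset.mul_sum]
    _ ≤ K * (ε / (K + 1)) := by gcongr; exact (hfδ E hE hlen).le
    _ < (K + 1) * (ε / (K + 1)) := by gcongr; linarith
    _ = ε := by field_simp

theorem LocallyLipschitz.comp_absolutelyContinuousOnInterval {E Y : Type*}
    [SeminormedAddCommGroup E] [PseudoMetricSpace Y] {g : E → Y} {f : ℝ → E} {a b : ℝ}
    (hg : LocallyLipschitz g) (hf : AbsolutelyContinuousOnInterval f a b) :
    AbsolutelyContinuousOnInterval (g ∘ f) a b := by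
  obtain ⟨K, hK⟩ :=
    (hg.locallyLipschitzOn (s := f '' uIcc a b)).exists_lipschitzOnWith_of_compact
      (isCompact_uIcc.image_of_continuousOn hf.continuousOn)
  exact hK.comp_absolutelyContinuousOnInterval hf (mapsTo_image f _)

theorem intervalIntegral.integral_deriv_comp_primitive_mul {G f : ℝ → ℝ} {a b : ℝ} (c : ℝ)
    (hG : ContDiff ℝ 1 G) (hf : IntervalIntegrable f volume a b) :
    ∫ t in a..b, deriv G (c + ∫ s in a..t, f s) * f t = G (c + ∫ s in a..b, f s) - G c := by
  set F : ℝ → ℝ := fun t => c + ∫ s in a..t, f s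
  have hF : AbsolutelyContinuousOnInterval F a b :=
    (LipschitzWith.const c).lipschitzOnWith.absolutelyContinuousOnInterval.add
      (hf.absolutelyContinuousOnInterval_intervalIntegral left_mem_uIcc)
  have hGF := hG.locallyLipschitz.comp_absolutelyContinuousOnInterval hF
  calc ∫ t in a..b, deriv G (F t) * f t = ∫ t in a..b, deriv (G ∘ F) t := by
        refine intervalIntegral.integral_congr_ae ?_
        filter_upwards [hf.ae_hasDerivAt_integral] with t ht htab
        have hFt : HasDerivAt F (f t) t :=
          (ht (uIoc_subset_uIcc htab) a left_mem_uIcc).const_add c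
        exact (((hG.differentiable one_ne_zero) (F t)).hasDerivAt.comp t hFt).deriv.symm
    _ = G (F b) - G (F a) := hGF.integral_deriv_eq_sub
    _ = G (c + ∫ s in a..b, f s) - G c := by simp [F]

theorem ofReal_sq_integral_mul_le {α : Type*} [MeasurableSpace α] {μ : Measure α}
    {f g : α → ℝ} (hf : AEMeasurable f μ) (hg : AEMeasurable g μ) :
    ENNReal.ofReal ((∫ x, f x * g x ∂μ) ^ 2) ≤
      (∫⁻ x, ENNReal.ofReal (f x ^ 2) ∂μ) * ∫⁻ x, ENNReal.ofReal (g x ^ 2) ∂μ := by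
  have hsq : ∀ r : ℝ, ENNReal.ofReal (r ^ 2) = ‖r‖ₑ ^ (2 : ℝ) := fun r => by
    rw [Real.enorm_eq_ofReal_abs, ENNReal.rpow_two, ← ENNReal.ofReal_pow (abs_nonneg r),
      sq_abs]
  have holder := ENNReal.lintegral_mul_le_Lp_mul_Lq μ Real.HolderConjugate.two_two
    hf.enorm hg.enorm
  simp only [Pi.mul_apply, ← enorm_mul] at holder
  calc ENNReal.ofReal ((∫ x, f x * g x ∂μ) ^ 2) = ‖∫ x, f x * g x ∂μ‖ₑ ^ (2 : ℝ) := hsq _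
    _ ≤ (∫⁻ x, ‖f x * g x‖ₑ ∂μ) ^ (2 : ℝ) := by
        gcongr; exact enorm_integral_le_lintegral_enorm _
    _ ≤ ((∫⁻ x, ‖f x‖ₑ ^ (2 : ℝ) ∂μ) ^ (1 / 2 : ℝ) *
          (∫⁻ x, ‖g x‖ₑ ^ (2 : ℝ) ∂μ) ^ (1 / 2 : ℝ)) ^ (2 : ℝ) :=
        ENNReal.rpow_le_rpow holder zero_le_two
    _ = _ := by
        rw [ENNReal.mul_rpow_of_nonneg _ _ zero_le_two, ← ENNReal.rpow_mul, ← ENNReal.rpow_mul]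
        norm_num [hsq]

namespace Admissible

variable {φl φr w T : ℝ} {φ dφ : ℝ → ℝ}

theorem rpow_three_halves_sub_eq (hT : 0 ≤ T) (h : Admissible φl φr w T φ dφ) :
    φr ^ (3 / 2 : ℝ) - φl ^ (3 / 2 : ℝ) =
      3 / 2 * ∫ t in Ioc 0 T, dφ t * φ t ^ (1 / 2 : ℝ) := by
  obtain ⟨-, h0, hTv, hint, hftc, -⟩ := h
  have hφ : ∀ t ∈ uIcc 0 T, φl + ∫ s in 0..t, dφ s = φ t := fun t ht => by
    rw [hftc t (uIcc_of_le hT ▸ ht), h0]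
  have chain := intervalIntegral.integral_deriv_comp_primitive_mul φl
    (Real.contDiff_rpow_const_of_le (p := 3 / 2) (n := 1) (by norm_num))
    ((intervalIntegrable_iff_integrableOn_Icc_of_le hT).2 hint)
  rw [intervalIntegral.integral_congr fun t ht => by rw [hφ t ht], hφ T right_mem_uIcc, hTv,
    Real.deriv_rpow_const', intervalIntegral.integral_of_le hT] at chain
  rw [← chain, ← integral_const_mul]
  congr 1 with t
  norm_num
  ring

theorem ofReal_le_lintegral_sq_deriv (hφl : 0 ≤ φl) (hw : 0 < w) (hT : 0 ≤ T)
    (h : Admissible φl φr w T φ dφ) :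
    ENNReal.ofReal ((4 / 9) * (φr ^ (3 / 2 : ℝ) - φl ^ (3 / 2 : ℝ)) ^ 2 / w) ≤
      ∫⁻ t in Ioc 0 T, ENNReal.ofReal (dφ t ^ 2) := by
  have hΔ := h.rpow_three_halves_sub_eq hT
  obtain ⟨hrange, -, -, hint, -, hmass⟩ := h
  rw [intervalIntegral.integral_of_le hT] at hmass
  have hφint : IntegrableOn φ (Ioc 0 T) := Integrable.of_integral_ne_zero (hmass ▸ hw.ne')
  have hφ_nonneg : ∀ᵐ t ∂volume.restrict (Ioc 0 T), 0 ≤ φ t := by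
    filter_upwards [ae_restrict_mem measurableSet_Ioc] with t ht
    exact hφl.trans (hrange t (Ioc_subset_Icc_self ht)).1
  have hmass' :
      ∫⁻ t in Ioc 0 T, ENNReal.ofReal ((φ t ^ (1 / 2 : ℝ)) ^ 2) = ENNReal.ofReal w := by
    rw [← hmass, ofReal_integral_eq_lintegral_ofReal hφint hφ_nonneg]
    refine lintegral_congr_ae ?_
    filter_upwards [hφ_nonneg] with t ht
    rw [← Real.sqrt_eq_rpow, Real.sq_sqrt ht]
  have hcs := ofReal_sq_integral_mul_le (hint.mono_set Ioc_subset_Icc_self).aemeasurable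
    (hφint.aemeasurable.pow_const (1 / 2 : ℝ))
  rw [hmass'] at hcs
  rw [ENNReal.ofReal_div_of_pos hw]
  refine ENNReal.div_le_of_le_mul (le_of_eq_of_le ?_ hcs)
  rw [hΔ]
  ring_nf

end Admissible

theorem integral_sq_ramp {a b T : ℝ} (hab : a ≠ b) (hT : T ≠ 0) :
    ∫ t in (0 : ℝ)..T, (a + (b - a) / T * t) ^ 2 = T * (a ^ 2 + a * b + b ^ 2) / 3 := by
  have hba : b - a ≠ 0 := sub_ne_zero.2 hab.symm
  rw [intervalIntegral.integral_comp_add_mul (fun x => x ^ 2) (div_ne_zero hba hT), integral_pow]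
  simp only [smul_eq_mul, mul_zero, add_zero]
  field_simp
  ring

theorem admissible_sq_ramp {a b T : ℝ} (ha : 0 ≤ a) (hab : a < b) (hT : 0 < T) :
    Admissible (a ^ 2) (b ^ 2) (T * (a ^ 2 + a * b + b ^ 2) / 3) T
      (fun t => (a + (b - a) / T * t) ^ 2)
      (fun t => 2 * ((b - a) / T) * (a + (b - a) / T * t)) := by
  set k := (b - a) / T
  have hkT : k * T = b - a := div_mul_cancel₀ _ hT.ne'
  have hderiv : ∀ t, HasDerivAt (fun t => (a + k * t) ^ 2) (2 * k * (a + k * t)) t := fun t => by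
    refine ((((hasDerivAt_id t).const_mul k).const_add a).fun_pow 2).congr_deriv ?_
    simp only [id, mul_one]
    ring
  have hcont : Continuous fun t => 2 * k * (a + k * t) := by fun_prop
  refine ⟨fun t ht => ?_, by simp, by simp [hkT], hcont.integrableOn_Icc, fun t _ => ?_,
    integral_sq_ramp hab.ne hT.ne'⟩
  · have hk : 0 ≤ k := div_nonneg (sub_nonneg.2 hab.le) hT.le
    have hkt : k * t ≤ b - a := hkT ▸ mul_le_mul_of_nonneg_left ht.2 hk
    have hlo : a ≤ a + k * t := le_add_of_nonneg_right (mul_nonneg hk ht.1)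
    exact ⟨pow_le_pow_left₀ ha hlo 2, pow_le_pow_left₀ (ha.trans hlo) (by linarith) 2⟩
  · rw [intervalIntegral.integral_eq_sub_of_hasDerivAt (fun t _ => hderiv t)
      (hcont.intervalIntegrable _ _)]
    ring

theorem lintegral_sq_deriv_ramp {a b T : ℝ} (hab : a ≠ b) (hT : 0 < T) :
    ∫⁻ t in Ioc 0 T, ENNReal.ofReal ((2 * ((b - a) / T) * (a + (b - a) / T * t)) ^ 2) =
      ENNReal.ofReal (4 * (b - a) ^ 2 * (a ^ 2 + a * b + b ^ 2) / (3 * T)) := by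
  have hcont : Continuous fun t => (2 * ((b - a) / T) * (a + (b - a) / T * t)) ^ 2 := by
    fun_prop
  rw [← ofReal_integral_eq_lintegral_ofReal
      (hcont.integrableOn_Icc.mono_set Ioc_subset_Icc_self) (ae_of_all _ fun t => sq_nonneg _),
    ← intervalIntegral.integral_of_le hT.le]
  simp_rw [mul_pow _ (a + _), intervalIntegral.integral_const_mul, integral_sq_ramp hab hT.ne']
  congr 1
  field_simp
  ring

theorem exists_quadratic_admissible_lintegral_sq_eq {φl φr w : ℝ} (hφl : 0 ≤ φl)
    (hlr : φl < φr) (hw : 0 < w) :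
    ∃ T : ℝ, T = 3 * w / (φl + Real.sqrt (φl * φr) + φr) ∧ 0 < T ∧
      ∃ φ dφ : ℝ → ℝ, Admissible φl φr w T φ dφ ∧
        (∃ A B C : ℝ, ∀ t ∈ Icc (0:ℝ) T, φ t = A * t ^ 2 + B * t + C) ∧
        (∫⁻ t in Ioc (0:ℝ) T, ENNReal.ofReal ((dφ t) ^ 2)) =
          ENNReal.ofReal ((4/9) * (φr ^ ((3:ℝ)/2) - φl ^ ((3:ℝ)/2)) ^ 2 / w) := by
  obtain ⟨a, ha, rfl⟩ : ∃ a, 0 ≤ a ∧ a ^ 2 = φl := ⟨_, Real.sqrt_nonneg _, Real.sq_sqrt hφl⟩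
  obtain ⟨b, hb, rfl⟩ : ∃ b, 0 ≤ b ∧ b ^ 2 = φr :=
    ⟨_, Real.sqrt_nonneg _, Real.sq_sqrt (hφl.trans hlr.le)⟩
  have hab : a < b := (pow_lt_pow_iff_left₀ ha hb two_ne_zero).1 hlr
  have hs : 0 < a ^ 2 + a * b + b ^ 2 := by nlinarith
  have hpow : ∀ x : ℝ, 0 ≤ x → (x ^ 2) ^ (3 / 2 : ℝ) = x ^ 3 := fun x hx => by
    rw [← Real.rpow_natCast, ← Real.rpow_mul hx]
    norm_num
  rw [← mul_pow, Real.sqrt_sq (mul_nonneg ha hb), hpow a ha, hpow b hb]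
  set T := 3 * w / (a ^ 2 + a * b + b ^ 2) with hT_def
  have hT : 0 < T := by positivity
  have hmass : T * (a ^ 2 + a * b + b ^ 2) / 3 = w := by
    rw [hT_def, div_mul_cancel₀ _ hs.ne']
    ring
  refine ⟨T, rfl, hT, _, _, hmass ▸ admissible_sq_ramp ha hab hT,
    ⟨((b - a) / T) ^ 2, 2 * a * ((b - a) / T), a ^ 2, fun t _ => by ring⟩, ?_⟩
  rw [lintegral_sq_deriv_ramp hab.ne hT, ← hmass,
    show b ^ 3 - a ^ 3 = (b - a) * (a ^ 2 + a * b + b ^ 2) by ring]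
  congr 1
  field_simp [hs.ne']
  ring

/-- the minimal Dirichlet energy of a monotone transition profile of mass `w`
between the levels `φl < φr` is `(4/9)(φr^{3/2} - φl^{3/2})²/w`, attained at
`T = 3w/(φl + √(φl·φr) + φr)` by a quadratic polynomial profile. -/
theorem minimal_transition_energy
    (φl φr w : ℝ) (hφl : 0 ≤ φl) (hlr : φl < φr) (hw : 0 < w) :
    IsLeast { E : ℝ≥0∞ | ∃ T : ℝ, 0 < T ∧ ∃ φ dφ : ℝ → ℝ,
        Admissible φl φr w T φ dφ ∧
        E = ∫⁻ t in Ioc (0:ℝ) T, ENNReal.ofReal ((dφ t) ^ 2) }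
      (ENNReal.ofReal ((4/9) * (φr ^ ((3:ℝ)/2) - φl ^ ((3:ℝ)/2)) ^ 2 / w)) ∧
    ∃ T : ℝ, T = 3 * w / (φl + Real.sqrt (φl * φr) + φr) ∧ 0 < T ∧
      ∃ φ dφ : ℝ → ℝ, Admissible φl φr w T φ dφ ∧
        (∃ A B C : ℝ, ∀ t ∈ Icc (0:ℝ) T, φ t = A * t ^ 2 + B * t + C) ∧
        (∫⁻ t in Ioc (0:ℝ) T, ENNReal.ofReal ((dφ t) ^ 2)) =
          ENNReal.ofReal ((4/9) * (φr ^ ((3:ℝ)/2) - φl ^ ((3:ℝ)/2)) ^ 2 / w) := by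
  have hopt := exists_quadratic_admissible_lintegral_sq_eq hφl hlr hw
  refine ⟨⟨?_, ?_⟩, hopt⟩
  · obtain ⟨T, -, hT, φ, dφ, hadm, -, hE⟩ := hopt
    exact ⟨T, hT, φ, dφ, hadm, hE.symm⟩
  · rintro E ⟨T, hT, φ, dφ, hadm, rfl⟩
    exact hadm.ofReal_le_lintegral_sq_deriv hφl hw hT.le
end
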